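/- arXiv:1903.04441 — 4 statements merged into one kernel-verified Lean document; each statement's English description precedes it below -/
import Mathlib

section
/- Let d ≥ 1, let (Ω, 𝓕, P) be a probability space and let (g_n)_{n ∈ ℤ^d} be a family of independent standard real Gaussian random variables on Ω. Let α > d/2 and let p ∈ [1, ∞). Then there exists a constant C_p > 0 such that for every N ∈ ℕ, E[ ( ∫_{[0,2π]^d} exp( Σ_{n ∈ ℤ^d, ‖n‖ ≤ N} (1 + ‖n‖²)^{−α/2} g_n(ω) cos(n·x) ) dx )^p ] ≤ C_p. -/
open MeasureTheory ProbabilityTheory Real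
open scoped ENNReal NNReal

lemma aux_gauss {Ω : Type*} [MeasurableSpace Ω] (P : Measure Ω) [IsProbabilityMeasure P]
    {X : Ω → ℝ} (hX : Measurable X) (hmap : Measure.map X P = gaussianReal 0 1) (s : ℝ) :
    Integrable (fun ω => Real.exp (s * X ω)) P ∧
      ∫ ω, Real.exp (s * X ω) ∂P = Real.exp (s ^ 2 / 2) := by
  have hpdf_eq : (fun x : ℝ => Real.exp (s * x) * gaussianPDFReal 0 1 x)
      = fun x => Real.exp (s ^ 2 / 2) * gaussianPDFReal s 1 x := by
    ext x
    simp only [gaussianPDFReal, NNReal.coe_one, mul_one, sub_zero]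
    have h : rexp (-x ^ 2 / 2) * rexp (s * x) = rexp (s ^ 2 / 2) * rexp (-(x - s) ^ 2 / 2) := by
      rw [← Real.exp_add, ← Real.exp_add]
      congr 1
      ring
    linear_combination (√(2 * π))⁻¹ * h
  have hg : gaussianReal 0 1 = (volume : Measure ℝ).withDensity (gaussianPDF 0 1) :=
    gaussianReal_of_var_ne_zero 0 one_ne_zero
  have hmeasexp : Measurable fun x : ℝ => Real.exp (s * x) :=
    (measurable_const.mul measurable_id).exp
  have hint : Integrable (fun x : ℝ => Real.exp (s * x)) (gaussianReal 0 1) := by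
    rw [hg, integrable_withDensity_iff (measurable_gaussianPDF 0 1)
      (ae_of_all _ fun x => ENNReal.ofReal_lt_top)]
    have : (fun x : ℝ => Real.exp (s * x) * (gaussianPDF 0 1 x).toReal)
        = fun x => Real.exp (s ^ 2 / 2) * gaussianPDFReal s 1 x := by
      rw [← hpdf_eq]
      ext x
      rw [gaussianPDF, ENNReal.toReal_ofReal (gaussianPDFReal_nonneg _ _ _)]
    rw [this]
    exact (integrable_gaussianPDFReal s 1).const_mul _
  have hval : ∫ x, Real.exp (s * x) ∂(gaussianReal 0 1) = Real.exp (s ^ 2 / 2) := by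
    have hwd : gaussianReal 0 1
        = (volume : Measure ℝ).withDensity (fun x => ((gaussianPDFReal 0 1 x).toNNReal : ℝ≥0∞)) := by
      rw [hg]
      congr 1
    rw [hwd, integral_withDensity_eq_integral_smul
      ((measurable_gaussianPDFReal 0 1).real_toNNReal)]
    have : (fun x : ℝ => (Real.toNNReal (gaussianPDFReal 0 1 x)) • Real.exp (s * x))
        = fun x => Real.exp (s ^ 2 / 2) * gaussianPDFReal s 1 x := by
      rw [← hpdf_eq]
      ext x
      rw [NNReal.smul_def, smul_eq_mul, Real.coe_toNNReal _ (gaussianPDFReal_nonneg _ _ _),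
        mul_comm]
    rw [this, integral_const_mul, integral_gaussianPDFReal_eq_one s one_ne_zero, mul_one]
  constructor
  · rw [← hmap] at hint
    exact (integrable_map_measure hmeasexp.aestronglyMeasurable hX.aemeasurable).mp hint
  · rw [← hval, ← hmap, integral_map hX.aemeasurable hmeasexp.aestronglyMeasurable]

lemma aux_summable {β : ℝ} (hβ : 1/2 < β) :
    Summable (fun j : ℤ => (1 + (j : ℝ) ^ 2) ^ (-β)) := by
  have hβ0 : 0 < β := by linarith
  have hnat : Summable (fun n : ℕ => (1 + (n : ℝ) ^ 2) ^ (-β)) := by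
    have h1 : Summable (fun n : ℕ => 1 / (n : ℝ) ^ (2 * β)) :=
      Real.summable_one_div_nat_rpow.mpr (by linarith)
    have h2 : Summable (fun n : ℕ => 1 / ((n + 1 : ℕ) : ℝ) ^ (2 * β)) :=
      (summable_nat_add_iff 1).mpr h1
    have h3 : Summable (fun n : ℕ => (2 : ℝ) ^ β * (1 / ((n + 1 : ℕ) : ℝ) ^ (2 * β))) :=
      h2.mul_left _
    refine h3.of_nonneg_of_le (fun n => Real.rpow_nonneg (by positivity) _) (fun n => ?_)
    have hpos : (0 : ℝ) < ((n : ℝ) + 1) ^ 2 / 2 := by positivity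
    have hle : ((n : ℝ) + 1) ^ 2 / 2 ≤ 1 + (n : ℝ) ^ 2 := by nlinarith [sq_nonneg ((n : ℝ) - 1)]
    calc (1 + (n : ℝ) ^ 2) ^ (-β) ≤ (((n : ℝ) + 1) ^ 2 / 2) ^ (-β) :=
          Real.rpow_le_rpow_of_nonpos hpos hle (by linarith)
      _ = (2 : ℝ) ^ β * (1 / ((n + 1 : ℕ) : ℝ) ^ (2 * β)) := by
          rw [Real.div_rpow (by positivity) (by norm_num), Real.rpow_neg (by positivity),
            Real.rpow_neg (by norm_num), ← Real.rpow_natCast ((n : ℝ) + 1) 2,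
            ← Real.rpow_mul (by positivity)]
          push_cast
          rw [div_eq_mul_inv, one_div, mul_comm]
          rw [inv_inv]
  refine Summable.of_nat_of_neg (by simpa using hnat) ?_
  have : (fun n : ℕ => (1 + ((-(n : ℤ) : ℤ) : ℝ) ^ 2) ^ (-β))
      = fun n : ℕ => (1 + (n : ℝ) ^ 2) ^ (-β) := by
    ext n; push_cast; rw [neg_sq]
  simpa [this] using hnat

set_option maxHeartbeats 1000000 in
lemma aux_latsum (d : ℕ) (hd : 1 ≤ d) {α : ℝ} (hα : (d : ℝ) / 2 < α) :
    ∃ K : ℝ, 0 ≤ K ∧ ∀ Λ : Finset (Fin d → ℤ),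
      ∑ n ∈ Λ, (1 + ∑ i, ((n i : ℝ)) ^ 2) ^ (-α) ≤ K := by
  have hd0 : (0 : ℝ) < d := by exact_mod_cast hd
  set β := α / d with hβdef
  have hβ : 1/2 < β := by
    rw [hβdef, lt_div_iff₀ hd0]
    linarith
  have hβ0 : 0 < β := by linarith
  have hdβ : (d : ℝ) * β = α := by
    rw [hβdef, mul_div_assoc', mul_comm, mul_div_assoc, div_self hd0.ne', mul_one]
  have hsum := aux_summable hβ
  set K₁ := ∑' j : ℤ, (1 + (j : ℝ) ^ 2) ^ (-β) with hK₁
  have hK₁0 : 0 ≤ K₁ := tsum_nonneg (fun j => Real.rpow_nonneg (by positivity) _)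
  refine ⟨K₁ ^ d, by positivity, fun Λ => ?_⟩
  have hterm : ∀ n : Fin d → ℤ, (1 + ∑ i, ((n i : ℝ)) ^ 2) ^ (-α)
      ≤ ∏ i, (1 + ((n i : ℝ)) ^ 2) ^ (-β) := by
    intro n
    have hS0 : (0 : ℝ) < 1 + ∑ i, ((n i : ℝ)) ^ 2 := by positivity
    have hP0 : (0 : ℝ) < ∏ i, (1 + ((n i : ℝ)) ^ 2) := by positivity
    have hprod : ∏ i, (1 + ((n i : ℝ)) ^ 2) ≤ (1 + ∑ i, ((n i : ℝ)) ^ 2) ^ d := by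
      have h := Finset.prod_le_prod (s := Finset.univ)
        (f := fun i : Fin d => 1 + ((n i : ℝ)) ^ 2)
        (g := fun _ : Fin d => 1 + ∑ i, ((n i : ℝ)) ^ 2)
        (fun i _ => by positivity)
        (fun i _ => by
          have h2 : ((n i : ℝ)) ^ 2 ≤ ∑ j, ((n j : ℝ)) ^ 2 :=
            Finset.single_le_sum (f := fun j => ((n j : ℝ)) ^ 2)
              (fun j _ => sq_nonneg _) (Finset.mem_univ i)
          linarith)
      simpa [Finset.prod_const, Finset.card_univ] using h
    have key : (∏ i, (1 + ((n i : ℝ)) ^ 2)) ^ β ≤ (1 + ∑ i, ((n i : ℝ)) ^ 2) ^ α := by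
      calc (∏ i, (1 + ((n i : ℝ)) ^ 2)) ^ β
          ≤ ((1 + ∑ i, ((n i : ℝ)) ^ 2) ^ d) ^ β :=
            Real.rpow_le_rpow hP0.le hprod hβ0.le
        _ = (1 + ∑ i, ((n i : ℝ)) ^ 2) ^ α := by
            rw [← Real.rpow_natCast (1 + ∑ i, ((n i : ℝ)) ^ 2) d, ← Real.rpow_mul hS0.le, hdβ]
    rw [Real.rpow_neg hS0.le]
    have : ∏ i, (1 + ((n i : ℝ)) ^ 2) ^ (-β) = ((∏ i, (1 + ((n i : ℝ)) ^ 2)) ^ β)⁻¹ := by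
      rw [← Real.finset_prod_rpow _ _ (fun i _ => by positivity) β, ← Finset.prod_inv_distrib]
      exact Finset.prod_congr rfl (fun i _ => by
        rw [Real.rpow_neg (by positivity)])
    rw [this]
    exact inv_anti₀ (by positivity) key
  calc ∑ n ∈ Λ, (1 + ∑ i, ((n i : ℝ)) ^ 2) ^ (-α)
      ≤ ∑ n ∈ Λ, ∏ i, (1 + ((n i : ℝ)) ^ 2) ^ (-β) := Finset.sum_le_sum (fun n _ => hterm n)
    _ ≤ ∑ n ∈ Fintype.piFinset (fun i : Fin d => Λ.image (fun m : Fin d → ℤ => m i)),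
          ∏ i, (1 + (((n : Fin d → ℤ) i : ℝ)) ^ 2) ^ (-β) := by
        refine Finset.sum_le_sum_of_subset_of_nonneg ?_ (fun n _ _ => by positivity)
        intro n hn
        rw [Fintype.mem_piFinset]
        exact fun i => Finset.mem_image_of_mem _ hn
    _ = ∏ i, ∑ j ∈ Λ.image (fun m : Fin d → ℤ => m i), (1 + ((j : ℤ) : ℝ) ^ 2) ^ (-β) :=
        (Finset.prod_univ_sum (fun i : Fin d => Λ.image (fun m : Fin d → ℤ => m i))
          (fun _ j => (1 + ((j : ℤ) : ℝ) ^ 2) ^ (-β))).symm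
    _ ≤ ∏ _i : Fin d, K₁ := by
        refine Finset.prod_le_prod (fun i _ => Finset.sum_nonneg (fun j _ => by positivity))
          (fun i _ => Summable.sum_le_tsum _ (fun j _ => by positivity) hsum)
    _ = K₁ ^ d := by simp

lemma aux_holder {X : Type*} [MeasurableSpace X] (μ : Measure X) [IsFiniteMeasure μ]
    {f : X → ℝ≥0∞} (hf : AEMeasurable f μ) {p : ℝ} (hp : 1 ≤ p) :
    (∫⁻ x, f x ∂μ) ^ p ≤ μ Set.univ ^ (p - 1) * ∫⁻ x, f x ^ p ∂μ := by
  rcases eq_or_lt_of_le hp with h1 | h1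
  · rw [← h1]
    simp
  · have hpq : p.HolderConjugate (p.conjExponent) := Real.HolderConjugate.conjExponent h1
    have hH := ENNReal.lintegral_mul_le_Lp_mul_Lq μ hpq hf
      (aemeasurable_const (b := (1 : ℝ≥0∞)))
    simp only [Pi.mul_apply, Pi.one_def, mul_one, ENNReal.one_rpow, lintegral_one] at hH
    have hmono := ENNReal.rpow_le_rpow hH (le_of_lt (lt_trans zero_lt_one h1))
    have hp0 : p ≠ 0 := by positivity
    rw [ENNReal.mul_rpow_of_nonneg _ _ (by positivity), ← ENNReal.rpow_mul,
      ← ENNReal.rpow_mul, one_div_mul_cancel hp0, ENNReal.rpow_one] at hmono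
    have hexp : 1 / p.conjExponent * p = p - 1 := by
      rw [Real.conjExponent]
      field_simp
    rw [hexp] at hmono
    calc (∫⁻ x, f x ∂μ) ^ p ≤ (∫⁻ x, f x ^ p ∂μ) * μ Set.univ ^ (p - 1) := hmono
      _ = μ Set.univ ^ (p - 1) * ∫⁻ x, f x ^ p ∂μ := mul_comm _ _

/-- uniform-in-`N` `L^p(Ω)` bound for the truncated partition function
`F_N = ∫_{[0,2π]^d} exp(∑_{‖n‖≤N} ⟨n⟩^{-α} g_n cos(n·x)) dx`, for `α > d/2`. -/
theorem stmt_2 (d : ℕ) (hd : 1 ≤ d)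
    {Ω : Type*} [MeasurableSpace Ω] (P : Measure Ω) [IsProbabilityMeasure P]
    (g : (Fin d → ℤ) → Ω → ℝ) (hmeas : ∀ n, Measurable (g n))
    (hindep : iIndepFun g P)
    (hgauss : ∀ n, Measure.map (g n) P = gaussianReal 0 1)
    (α : ℝ) (hα : (d : ℝ) / 2 < α) (p : ℝ) (hp : 1 ≤ p) :
    ∃ C : ℝ, 0 < C ∧ ∀ N : ℕ,
      (∫⁻ ω, ENNReal.ofReal
        ((∫ x in Set.pi Set.univ (fun _ : Fin d => Set.Icc (0 : ℝ) (2 * π)),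
            Real.exp (∑' n : Fin d → ℤ,
              (if (∑ i, (n i) ^ 2 : ℤ) ≤ (N : ℤ) ^ 2 then
                (1 + ∑ i, ((n i : ℝ)) ^ 2) ^ (-α / 2) * g n ω *
                  Real.cos (∑ i, (n i : ℝ) * x i)
              else 0))) ^ p) ∂P)
        ≤ ENNReal.ofReal C := by
  classical
  obtain ⟨K, hK0, hKbd⟩ := aux_latsum d hd hα
  have hp0 : (0 : ℝ) < p := lt_of_lt_of_le zero_lt_one hp
  have h2π : (0 : ℝ) < 2 * π := by positivity
  set box : Set (Fin d → ℝ) := Set.pi Set.univ (fun _ : Fin d => Set.Icc (0 : ℝ) (2 * π))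
    with hbox
  have hboxcompact : IsCompact box := isCompact_univ_pi (fun _ => isCompact_Icc)
  set V : ℝ≥0∞ := volume box with hVdef
  have hV : V = ENNReal.ofReal ((2 * π) ^ d) := by
    rw [hVdef, hbox, volume_pi_pi]
    simp [Real.volume_Icc, ENNReal.ofReal_pow h2π.le]
  have hVne0 : V ≠ 0 := by
    rw [hV]; simp [ENNReal.ofReal_eq_zero]; positivity
  have hVnetop : V ≠ ⊤ := by rw [hV]; exact ENNReal.ofReal_ne_top
  haveI hfinbox : IsFiniteMeasure ((volume : Measure (Fin d → ℝ)).restrict box) :=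
    ⟨by rw [Measure.restrict_apply_univ]; exact hboxcompact.measure_lt_top⟩
  refine ⟨((2 * π) ^ d) ^ p * Real.exp (p ^ 2 * K / 2), by positivity, fun N => ?_⟩
  -- the coefficient function
  set coef : (Fin d → ℤ) → (Fin d → ℝ) → ℝ :=
    fun n x => (1 + ∑ i, ((n i : ℝ)) ^ 2) ^ (-α / 2) * Real.cos (∑ i, (n i : ℝ) * x i)
    with hcoef
  have hcoefcont : ∀ n, Continuous (coef n) := by
    intro n
    apply continuous_const.mul
    exact Real.continuous_cos.comp
      (continuous_finset_sum _ (fun i _ => continuous_const.mul (continuous_apply i)))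
  have hcoefsq : ∀ n x, (coef n x) ^ 2 ≤ (1 + ∑ i, ((n i : ℝ)) ^ 2) ^ (-α) := by
    intro n x
    have hs : (0 : ℝ) < 1 + ∑ i, ((n i : ℝ)) ^ 2 := by positivity
    rw [hcoef, mul_pow, ← Real.rpow_natCast ((1 + ∑ i, ((n i : ℝ)) ^ 2) ^ (-α / 2)) 2,
      ← Real.rpow_mul hs.le]
    have : -α / 2 * (2 : ℕ) = -α := by push_cast; ring
    rw [this]
    exact mul_le_of_le_one_right (Real.rpow_nonneg hs.le _) (Real.cos_sq_le_one _)
  -- the truncation finset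
  set Λ : Finset (Fin d → ℤ) :=
    (Fintype.piFinset (fun _ : Fin d => Finset.Icc (-(N : ℤ)) (N : ℤ))).filter
      (fun n => (∑ i, (n i) ^ 2 : ℤ) ≤ (N : ℤ) ^ 2) with hΛ
  -- the truncated sum
  set S : Ω → (Fin d → ℝ) → ℝ := fun ω x => ∑ n ∈ Λ, coef n x * g n ω with hS
  have h_tsum : ∀ ω x, (∑' n : Fin d → ℤ,
      (if (∑ i, (n i) ^ 2 : ℤ) ≤ (N : ℤ) ^ 2 then
        (1 + ∑ i, ((n i : ℝ)) ^ 2) ^ (-α / 2) * g n ω *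
          Real.cos (∑ i, (n i : ℝ) * x i)
      else 0)) = S ω x := by
    intro ω x
    rw [tsum_eq_sum (s := Λ) ?h0]
    · exact Finset.sum_congr rfl (fun n hn => by
        rw [if_pos (Finset.mem_filter.mp hn).2, hcoef]; ring)
    · intro n hn
      rw [if_neg]
      intro hcond
      apply hn
      rw [hΛ, Finset.mem_filter]
      refine ⟨Fintype.mem_piFinset.mpr (fun i => ?_), hcond⟩
      rw [Finset.mem_Icc]
      have h1 : (n i) ^ 2 ≤ (N : ℤ) ^ 2 := le_trans
        (Finset.single_le_sum (f := fun j => (n j) ^ 2) (fun j _ => sq_nonneg _)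
          (Finset.mem_univ i)) hcond
      constructor <;> nlinarith [sq_nonneg (n i + (N : ℤ)), sq_nonneg (n i - (N : ℤ))]
  -- variance bound
  have hvar : ∀ x, ∑ n ∈ Λ, (coef n x) ^ 2 ≤ K := fun x =>
    le_trans (Finset.sum_le_sum (fun n _ => hcoefsq n x)) (hKbd Λ)
  -- expectation bound for fixed x
  have hΩbound : ∀ x, (∫⁻ ω, ENNReal.ofReal (Real.exp (p * S ω x)) ∂P)
      ≤ ENNReal.ofReal (Real.exp (p ^ 2 * K / 2)) := by
    intro x
    set X : (Fin d → ℤ) → Ω → ℝ := fun n ω => coef n x * g n ω with hX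
    have hXmeas : ∀ n, Measurable (X n) := fun n => (hmeas n).const_mul _
    have hXindep : iIndepFun X P := by
      have := hindep.comp (fun n => fun y => coef n x * y)
        (fun n => measurable_const.mul measurable_id)
      exact this
    have hXint : ∀ n, Integrable (fun ω => Real.exp (p * X n ω)) P := by
      intro n
      have := (aux_gauss P (hmeas n) (hgauss n) (p * coef n x)).1
      simpa [hX, mul_assoc] using this
    have hXmgf : ∀ n, mgf (X n) P p = Real.exp ((p * coef n x) ^ 2 / 2) := by
      intro n
      have := (aux_gauss P (hmeas n) (hgauss n) (p * coef n x)).2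
      rw [mgf]
      simpa [hX, mul_assoc] using this
    have hsum_eq : ∀ ω, S ω x = (∑ n ∈ Λ, X n) ω := by
      intro ω; rw [hS, Finset.sum_apply]
    have hint : Integrable (fun ω => Real.exp (p * S ω x)) P := by
      have := hXindep.integrable_exp_mul_sum (t := p) hXmeas (s := Λ)
        (fun n _ => hXint n)
      exact this.congr (ae_of_all _ (fun ω => by simp only [hsum_eq ω]))
    have hval : ∫ ω, Real.exp (p * S ω x) ∂P ≤ Real.exp (p ^ 2 * K / 2) := by
      have hm : mgf (∑ n ∈ Λ, X n) P p = ∏ n ∈ Λ, mgf (X n) P p :=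
        hXindep.mgf_sum hXmeas Λ
      have : ∫ ω, Real.exp (p * S ω x) ∂P = mgf (∑ n ∈ Λ, X n) P p := by
        rw [mgf]
        exact integral_congr_ae (ae_of_all _ (fun ω => by simp only [hsum_eq ω]))
      rw [this, hm]
      have : ∏ n ∈ Λ, mgf (X n) P p = Real.exp (∑ n ∈ Λ, (p * coef n x) ^ 2 / 2) := by
        rw [Real.exp_sum]
        exact Finset.prod_congr rfl (fun n _ => hXmgf n)
      rw [this]
      apply Real.exp_le_exp.mpr
      have : ∑ n ∈ Λ, (p * coef n x) ^ 2 / 2 = p ^ 2 / 2 * ∑ n ∈ Λ, (coef n x) ^ 2 := by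
        rw [Finset.mul_sum]
        exact Finset.sum_congr rfl (fun n _ => by ring)
      rw [this]
      calc p ^ 2 / 2 * ∑ n ∈ Λ, (coef n x) ^ 2 ≤ p ^ 2 / 2 * K :=
            mul_le_mul_of_nonneg_left (hvar x) (by positivity)
        _ = p ^ 2 * K / 2 := by ring
    rw [← ofReal_integral_eq_lintegral_ofReal hint
      (ae_of_all _ (fun ω => Real.exp_nonneg _))]
    exact ENNReal.ofReal_le_ofReal (le_trans hval (le_refl _))
  -- continuity / integrability in x for fixed ω
  have hScont : ∀ ω, Continuous (fun x => S ω x) := by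
    intro ω
    apply continuous_finset_sum
    exact fun n _ => (hcoefcont n).mul continuous_const
  have hFint : ∀ ω, IntegrableOn (fun x => Real.exp (S ω x)) box volume := by
    intro ω
    exact (((hScont ω).rexp).continuousOn).integrableOn_compact hboxcompact
  -- pointwise (in ω) Jensen/Hölder step
  have hJensen : ∀ ω, ENNReal.ofReal ((∫ x in box, Real.exp (S ω x)) ^ p)
      ≤ V ^ (p - 1) * ∫⁻ x in box, ENNReal.ofReal (Real.exp (p * S ω x)) := by
    intro ω
    have hFnn : 0 ≤ ∫ x in box, Real.exp (S ω x) :=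
      integral_nonneg (fun x => Real.exp_nonneg _)
    rw [← ENNReal.ofReal_rpow_of_nonneg hFnn hp0.le,
      ofReal_integral_eq_lintegral_ofReal (hFint ω)
        (ae_of_all _ (fun x => Real.exp_nonneg _))]
    have hmeasf : AEMeasurable (fun x => ENNReal.ofReal (Real.exp (S ω x)))
        ((volume : Measure (Fin d → ℝ)).restrict box) :=
      (ENNReal.measurable_ofReal.comp ((hScont ω).rexp).measurable).aemeasurable
    refine le_trans (aux_holder _ hmeasf hp) ?_
    rw [Measure.restrict_apply_univ]
    refine mul_le_mul_right (lintegral_mono (fun x => ?_)) _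
    rw [ENNReal.ofReal_rpow_of_nonneg (Real.exp_nonneg _) hp0.le]
    apply ENNReal.ofReal_le_ofReal
    have hpow : Real.exp (S ω x) ^ p = Real.exp (p * S ω x) := by
      rw [← Real.exp_one_rpow (S ω x), ← Real.rpow_mul (Real.exp_pos 1).le,
        Real.exp_one_rpow, mul_comm]
    rw [hpow]
  -- joint measurability
  have hjoint : Measurable (fun q : Ω × (Fin d → ℝ) =>
      ENNReal.ofReal (Real.exp (p * S q.1 q.2))) := by
    apply ENNReal.measurable_ofReal.comp
    apply Measurable.exp
    apply Measurable.const_mul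
    rw [hS]
    apply Finset.measurable_sum
    intro n _
    exact ((hcoefcont n).measurable.comp measurable_snd).mul ((hmeas n).comp measurable_fst)
  -- assemble
  calc (∫⁻ ω, ENNReal.ofReal
        ((∫ x in box,
            Real.exp (∑' n : Fin d → ℤ,
              (if (∑ i, (n i) ^ 2 : ℤ) ≤ (N : ℤ) ^ 2 then
                (1 + ∑ i, ((n i : ℝ)) ^ 2) ^ (-α / 2) * g n ω *
                  Real.cos (∑ i, (n i : ℝ) * x i)
              else 0))) ^ p) ∂P)
      = ∫⁻ ω, ENNReal.ofReal ((∫ x in box, Real.exp (S ω x)) ^ p) ∂P := by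
        apply lintegral_congr
        intro ω
        congr 1
        congr 1
        exact integral_congr_ae (ae_of_all _ (fun x => by simp only [h_tsum ω x]))
    _ ≤ ∫⁻ ω, (V ^ (p - 1) * ∫⁻ x in box, ENNReal.ofReal (Real.exp (p * S ω x))) ∂P :=
        lintegral_mono hJensen
    _ = V ^ (p - 1) * ∫⁻ ω, (∫⁻ x in box, ENNReal.ofReal (Real.exp (p * S ω x))) ∂P :=
        lintegral_const_mul' _ _ (ENNReal.rpow_ne_top_of_nonneg (by linarith) hVnetop)
    _ = V ^ (p - 1) * ∫⁻ x in box, ∫⁻ ω, ENNReal.ofReal (Real.exp (p * S ω x)) ∂P := by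
        rw [lintegral_lintegral_swap hjoint.aemeasurable]
    _ ≤ V ^ (p - 1) * ∫⁻ _x in box, ENNReal.ofReal (Real.exp (p ^ 2 * K / 2)) :=
        mul_le_mul_right (lintegral_mono' le_rfl (fun x => hΩbound x)) _
    _ = V ^ (p - 1) * (ENNReal.ofReal (Real.exp (p ^ 2 * K / 2)) * V) := by
        rw [setLIntegral_const]
    _ = ENNReal.ofReal (((2 * π) ^ d) ^ p * Real.exp (p ^ 2 * K / 2)) := by
        rw [← mul_assoc, mul_comm (V ^ (p - 1)), mul_assoc]
        have : V ^ (p - 1) * V = V ^ p := by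
          nth_rewrite 2 [← ENNReal.rpow_one V]
          rw [← ENNReal.rpow_add _ _ hVne0 hVnetop]
          norm_num
        rw [this, hV, ENNReal.ofReal_rpow_of_nonneg (by positivity) hp0.le,
          ← ENNReal.ofReal_mul (Real.exp_nonneg _)]
        congr 1
        ring
end

section
/- Let η : ℝ → ℂ be a smooth compactly supported function, let q ∈ [1, ∞) and let 0 < δ < 1. Then there exists a constant C > 0 such that for every λ ≥ 1, ∫_ℝ |τ|^{−1−2δ} ( ∫_ℝ |η(t)|^q · |e^{i(t+τ)λ} − e^{itλ}|^q dt )^{2/q} dτ ≤ C² λ^{2δ}. -/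
open MeasureTheory Real

open Set in
private lemma stmt4_lint_abs (f : ℝ → ENNReal) (hf : Measurable f) :
    ∫⁻ x : ℝ, f |x| = 2 * ∫⁻ x in Ioi (0:ℝ), f x := by
  have hmap : Measure.map (fun x : ℝ => -x) (volume : Measure ℝ) = volume :=
    Measure.map_neg_eq_self _
  have h1 : ∫⁻ x in Iic (0:ℝ), f |x| = ∫⁻ x in Ici (0:ℝ), f |x| := by
    conv_lhs => rw [← hmap]
    rw [setLIntegral_map (f := fun y => f |y|) measurableSet_Iic (hf.comp measurable_abs)
      measurable_neg]
    have hpre : (fun x : ℝ => -x) ⁻¹' Iic 0 = Ici 0 := by ext x; simp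
    rw [hpre]
    simp [abs_neg]
  have h2 : ∫⁻ x in Ici (0:ℝ), f |x| = ∫⁻ x in Ioi (0:ℝ), f x := by
    rw [← Measure.restrict_congr_set Ioi_ae_eq_Ici]
    refine setLIntegral_congr_fun measurableSet_Ioi ?_
    intro x hx; show f |x| = f x
    rw [abs_of_pos hx]
  have h3 : ∫⁻ x in Ioi (0:ℝ), f |x| = ∫⁻ x in Ioi (0:ℝ), f x := by
    refine setLIntegral_congr_fun measurableSet_Ioi ?_
    intro x hx; show f |x| = f x
    rw [abs_of_pos hx]
  rw [← lintegral_add_compl (fun x => f |x|) (measurableSet_Iic : MeasurableSet (Iic (0:ℝ))),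
    compl_Iic, h1, h2, h3, two_mul]

open Set in
private lemma stmt4_lint_Ioc_rpow {p a : ℝ} (hp : -1 < p) (ha : 0 < a) :
    ∫⁻ x in Ioc (0:ℝ) a, ENNReal.ofReal (x ^ p) = ENNReal.ofReal (a ^ (p+1) / (p+1)) := by
  have hint : IntegrableOn (fun x : ℝ => x ^ p) (Ioc 0 a) := by
    have := intervalIntegral.intervalIntegrable_rpow' (a := 0) (b := a) hp
    rwa [intervalIntegrable_iff, uIoc_of_le ha.le] at this
  rw [← ofReal_integral_eq_lintegral_ofReal hint]
  · congr 1
    rw [← intervalIntegral.integral_of_le ha.le, integral_rpow (Or.inl hp),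
      Real.zero_rpow (by linarith), sub_zero]
  · filter_upwards [ae_restrict_mem measurableSet_Ioc] with x hx
    exact Real.rpow_nonneg hx.1.le p

open Set in
private lemma stmt4_lint_Ioi_rpow {p a : ℝ} (hp : p < -1) (ha : 0 < a) :
    ∫⁻ x in Ioi a, ENNReal.ofReal (x ^ p) = ENNReal.ofReal (-a ^ (p+1) / (p+1)) := by
  rw [← ofReal_integral_eq_lintegral_ofReal (integrableOn_Ioi_rpow_of_lt hp ha)]
  · rw [integral_Ioi_rpow_of_lt hp ha]
  · filter_upwards [ae_restrict_mem measurableSet_Ioi] with x hx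
    exact Real.rpow_nonneg (ha.trans hx).le p

private lemma stmt4_norm_exp_I_mul (x : ℝ) : ‖Complex.exp (Complex.I * x)‖ = 1 := by
  rw [mul_comm]; exact Complex.norm_exp_ofReal_mul_I x

private lemma stmt4_exp_deriv (s : ℝ) :
    HasDerivAt (fun s : ℝ => Complex.exp (Complex.I * s))
      (Complex.I * Complex.exp (Complex.I * s)) s := by
  have h1 : HasDerivAt (fun z : ℂ => Complex.exp (Complex.I * z))
      (Complex.I * Complex.exp (Complex.I * s)) (s : ℂ) := by
    have h2 : HasDerivAt (fun z : ℂ => Complex.I * z) Complex.I (s : ℂ) := by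
      simpa using (hasDerivAt_id (s : ℂ)).const_mul Complex.I
    have h3 := (Complex.hasDerivAt_exp (Complex.I * s)).comp (s : ℂ) h2
    rw [mul_comm]
    exact h3
  exact h1.comp_ofReal

open Set in
private lemma stmt4_exp_dist_le (t τ lam : ℝ) (hlam : 0 ≤ lam) :
    ‖Complex.exp (Complex.I * (((t + τ) * lam : ℝ) : ℂ)) -
      Complex.exp (Complex.I * ((t * lam : ℝ) : ℂ))‖ ≤ min 2 (|τ| * lam) := by
  refine le_min ?_ ?_
  · calc _ ≤ ‖Complex.exp (Complex.I * (((t + τ) * lam : ℝ) : ℂ))‖ +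
        ‖Complex.exp (Complex.I * ((t * lam : ℝ) : ℂ))‖ := norm_sub_le _ _
    _ ≤ 2 := by rw [stmt4_norm_exp_I_mul, stmt4_norm_exp_I_mul]; norm_num
  · have := (convex_univ (𝕜 := ℝ) (E := ℝ)).norm_image_sub_le_of_norm_hasDerivWithin_le
      (f := fun s : ℝ => Complex.exp (Complex.I * s))
      (f' := fun s : ℝ => Complex.I * Complex.exp (Complex.I * s)) (C := 1)
      (fun x _ => (stmt4_exp_deriv x).hasDerivWithinAt)
      (fun x _ => by rw [norm_mul, Complex.norm_I, one_mul, stmt4_norm_exp_I_mul])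
      (mem_univ (t * lam)) (mem_univ ((t + τ) * lam))
    calc _ ≤ 1 * ‖(t + τ) * lam - t * lam‖ := this
    _ = |τ| * lam := by
        rw [one_mul, Real.norm_eq_abs,
          show (t + τ) * lam - t * lam = τ * lam by ring, abs_mul, abs_of_nonneg hlam]

set_option maxHeartbeats 1000000 in
open Set in
/-- the homogeneous Besov-type estimate
`∫ |τ|^{-1-2δ} (∫ |η(t)|^q |e^{i(t+τ)λ} - e^{itλ}|^q dt)^{2/q} dτ ≤ C² λ^{2δ}`
for smooth compactly supported `η`, `q ∈ [1,∞)`, `0 < δ < 1`, `λ ≥ 1`. -/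
theorem stmt_4 (η : ℝ → ℂ) (hη : ContDiff ℝ (⊤ : ℕ∞) η) (hsupp : HasCompactSupport η)
    (q : ℝ) (hq : 1 ≤ q) (δ : ℝ) (hδ0 : 0 < δ) (hδ1 : δ < 1) :
    ∃ C : ℝ, 0 < C ∧ ∀ lam : ℝ, 1 ≤ lam →
      (∫⁻ τ : ℝ, ENNReal.ofReal (|τ| ^ (-1 - 2 * δ)) *
        (∫⁻ t : ℝ, ENNReal.ofReal (‖η t‖ ^ q *
          ‖Complex.exp (Complex.I * (((t + τ) * lam : ℝ) : ℂ)) -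
            Complex.exp (Complex.I * ((t * lam : ℝ) : ℂ))‖ ^ q)) ^ (2 / q))
        ≤ ENNReal.ofReal (C ^ 2 * lam ^ (2 * δ)) := by
  have hq0 : (0:ℝ) < q := lt_of_lt_of_le one_pos hq
  set f : ℝ → ℝ := fun t => ‖η t‖ ^ q with hf_def
  have hf_nonneg : ∀ t, 0 ≤ f t := fun t => Real.rpow_nonneg (norm_nonneg _) q
  have hf_cont : Continuous f :=
    (hη.continuous.norm).rpow_const (fun x => Or.inr hq0.le)
  have hf_supp : HasCompactSupport f := by
    have : HasCompactSupport (fun t => ‖η t‖) := hsupp.norm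
    exact this.comp_left (g := fun y : ℝ => y ^ q) (Real.zero_rpow hq0.ne')
  have hf_int : Integrable f := hf_cont.integrable_of_hasCompactSupport hf_supp
  set A : ℝ := ∫ t : ℝ, f t with hA_def
  have hA0 : 0 ≤ A := integral_nonneg hf_nonneg
  set B : ℝ := A ^ (2 / q) with hB_def
  have hB0 : 0 ≤ B := Real.rpow_nonneg hA0 _
  have h1δ : (0:ℝ) < 1 - δ := by linarith
  have hc0 : (0:ℝ) < 1 / (1 - δ) + 4 / δ :=
    add_pos (div_pos one_pos h1δ) (div_pos (by norm_num) hδ0)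
  have hKpos : (0:ℝ) < (B + 1) * (1 / (1 - δ) + 4 / δ) :=
    mul_pos (by linarith) hc0
  refine ⟨Real.sqrt ((B + 1) * (1 / (1 - δ) + 4 / δ)), Real.sqrt_pos.mpr hKpos,
    fun lam hlam => ?_⟩
  have hC2 : Real.sqrt ((B + 1) * (1 / (1 - δ) + 4 / δ)) ^ 2
      = (B + 1) * (1 / (1 - δ) + 4 / δ) := Real.sq_sqrt hKpos.le
  have hlam0 : (0:ℝ) < lam := lt_of_lt_of_le one_pos hlam
  set a : ℝ := 1 / lam with ha_def
  have ha : 0 < a := by positivity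
  have hAlint : ENNReal.ofReal A = ∫⁻ t : ℝ, ENNReal.ofReal (f t) :=
    ofReal_integral_eq_lintegral_ofReal hf_int (Filter.Eventually.of_forall hf_nonneg)
  set F : ℝ → ℝ := fun x => x ^ (-1 - 2*δ) * ((min 2 (x*lam)) ^ (2:ℝ) * B) with hF_def
  set G : ℝ → ENNReal := fun x => ENNReal.ofReal (F x) with hG_def
  have hGmeas : Measurable G := by
    apply Measurable.ennreal_ofReal
    fun_prop
  -- Step 1: pointwise bound of the integrand in τ
  have hpoint : ∀ τ : ℝ, ENNReal.ofReal (|τ| ^ (-1 - 2 * δ)) *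
      (∫⁻ t : ℝ, ENNReal.ofReal (‖η t‖ ^ q *
        ‖Complex.exp (Complex.I * (((t + τ) * lam : ℝ) : ℂ)) -
          Complex.exp (Complex.I * ((t * lam : ℝ) : ℂ))‖ ^ q)) ^ (2 / q) ≤ G |τ| := by
    intro τ
    set m : ℝ := min 2 (|τ| * lam) with hm_def
    have hm0 : 0 ≤ m := le_min (by norm_num) (mul_nonneg (abs_nonneg _) hlam0.le)
    have hinner : (∫⁻ t : ℝ, ENNReal.ofReal (‖η t‖ ^ q *
        ‖Complex.exp (Complex.I * (((t + τ) * lam : ℝ) : ℂ)) -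
          Complex.exp (Complex.I * ((t * lam : ℝ) : ℂ))‖ ^ q)) ≤
        ENNReal.ofReal (m ^ q * A) := by
      calc (∫⁻ t : ℝ, ENNReal.ofReal (‖η t‖ ^ q *
          ‖Complex.exp (Complex.I * (((t + τ) * lam : ℝ) : ℂ)) -
            Complex.exp (Complex.I * ((t * lam : ℝ) : ℂ))‖ ^ q))
          ≤ ∫⁻ t : ℝ, ENNReal.ofReal (m ^ q * f t) := by
            refine lintegral_mono fun t => ENNReal.ofReal_le_ofReal ?_
            have hd := stmt4_exp_dist_le t τ lam hlam0.le
            have hdq : ‖Complex.exp (Complex.I * (((t + τ) * lam : ℝ) : ℂ)) -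
                Complex.exp (Complex.I * ((t * lam : ℝ) : ℂ))‖ ^ q ≤ m ^ q :=
              Real.rpow_le_rpow (norm_nonneg _) hd hq0.le
            rw [mul_comm (m ^ q)]
            exact mul_le_mul_of_nonneg_left hdq (hf_nonneg t)
        _ = ∫⁻ t : ℝ, ENNReal.ofReal (m ^ q) * ENNReal.ofReal (f t) := by
            refine lintegral_congr fun t => ?_
            exact ENNReal.ofReal_mul (Real.rpow_nonneg hm0 q)
        _ = ENNReal.ofReal (m ^ q) * ∫⁻ t : ℝ, ENNReal.ofReal (f t) :=
            lintegral_const_mul' _ _ ENNReal.ofReal_ne_top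
        _ = ENNReal.ofReal (m ^ q) * ENNReal.ofReal A := by rw [← hAlint]
        _ = ENNReal.ofReal (m ^ q * A) := (ENNReal.ofReal_mul (Real.rpow_nonneg hm0 q)).symm
    have hpow : (∫⁻ t : ℝ, ENNReal.ofReal (‖η t‖ ^ q *
        ‖Complex.exp (Complex.I * (((t + τ) * lam : ℝ) : ℂ)) -
          Complex.exp (Complex.I * ((t * lam : ℝ) : ℂ))‖ ^ q)) ^ (2/q) ≤
        ENNReal.ofReal (m ^ (2:ℝ) * B) := by
      calc _ ≤ (ENNReal.ofReal (m ^ q * A)) ^ (2/q) :=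
            ENNReal.rpow_le_rpow hinner (by positivity)
        _ = ENNReal.ofReal ((m ^ q * A) ^ (2/q)) :=
            ENNReal.ofReal_rpow_of_nonneg (mul_nonneg (Real.rpow_nonneg hm0 q) hA0)
              (by positivity)
        _ = ENNReal.ofReal (m ^ (2:ℝ) * B) := by
            congr 1
            rw [Real.mul_rpow (Real.rpow_nonneg hm0 q) hA0, ← Real.rpow_mul hm0,
              mul_div_cancel₀ 2 hq0.ne']
    calc ENNReal.ofReal (|τ| ^ (-1 - 2 * δ)) * _ ≤
        ENNReal.ofReal (|τ| ^ (-1 - 2 * δ)) * ENNReal.ofReal (m ^ (2:ℝ) * B) :=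
          mul_le_mul_right hpow _
      _ = G |τ| := by
          rw [hG_def]
          exact (ENNReal.ofReal_mul (Real.rpow_nonneg (abs_nonneg _) _)).symm
  -- Step 2: reduce to a one-dimensional integral on (0,∞)
  have hstep2 : (∫⁻ τ : ℝ, ENNReal.ofReal (|τ| ^ (-1 - 2 * δ)) *
      (∫⁻ t : ℝ, ENNReal.ofReal (‖η t‖ ^ q *
        ‖Complex.exp (Complex.I * (((t + τ) * lam : ℝ) : ℂ)) -
          Complex.exp (Complex.I * ((t * lam : ℝ) : ℂ))‖ ^ q)) ^ (2 / q))
      ≤ 2 * ∫⁻ x in Ioi (0:ℝ), G x := by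
    calc _ ≤ ∫⁻ τ : ℝ, G |τ| := lintegral_mono hpoint
      _ = 2 * ∫⁻ x in Ioi (0:ℝ), G x := stmt4_lint_abs G hGmeas
  -- Step 3: bound the two pieces
  have hsplit : ∫⁻ x in Ioi (0:ℝ), G x =
      (∫⁻ x in Ioc (0:ℝ) a, G x) + ∫⁻ x in Ioi a, G x := by
    rw [← Ioc_union_Ioi_eq_Ioi ha.le, lintegral_union measurableSet_Ioi Ioc_disjoint_Ioi_same]
  have hS1 : ∫⁻ x in Ioc (0:ℝ) a, G x ≤
      ENNReal.ofReal ((lam ^ (2:ℝ) * B) * (a ^ (2 - 2*δ) / (2 - 2*δ))) := by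
    calc ∫⁻ x in Ioc (0:ℝ) a, G x
        ≤ ∫⁻ x in Ioc (0:ℝ) a, ENNReal.ofReal (lam ^ (2:ℝ) * B) *
            ENNReal.ofReal (x ^ (1 - 2*δ)) := by
          refine setLIntegral_mono (by fun_prop) fun x hx => ?_
          rw [← ENNReal.ofReal_mul (by positivity)]
          refine ENNReal.ofReal_le_ofReal ?_
          have hx0 : (0:ℝ) < x := hx.1
          have hmin0 : 0 ≤ min 2 (x*lam) := le_min (by norm_num) (by positivity)
          have h2 : (min 2 (x*lam)) ^ (2:ℝ) ≤ (x*lam) ^ (2:ℝ) :=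
            Real.rpow_le_rpow hmin0 (min_le_right _ _) (by norm_num)
          have hxx : x ^ (-1 - 2*δ) * x ^ (2:ℝ) = x ^ (1 - 2*δ) := by
            rw [← Real.rpow_add hx0]; congr 1; ring
          calc F x ≤ x ^ (-1 - 2*δ) * ((x*lam) ^ (2:ℝ) * B) := by
                refine mul_le_mul_of_nonneg_left ?_ (Real.rpow_nonneg hx0.le _)
                exact mul_le_mul_of_nonneg_right h2 hB0
            _ = lam ^ (2:ℝ) * B * x ^ (1 - 2*δ) := by
                rw [Real.mul_rpow hx0.le hlam0.le, ← hxx]; ring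
      _ = ENNReal.ofReal (lam ^ (2:ℝ) * B) * ∫⁻ x in Ioc (0:ℝ) a,
            ENNReal.ofReal (x ^ (1 - 2*δ)) := lintegral_const_mul' _ _ ENNReal.ofReal_ne_top
      _ = ENNReal.ofReal (lam ^ (2:ℝ) * B) * ENNReal.ofReal (a ^ (2 - 2*δ) / (2 - 2*δ)) := by
          rw [stmt4_lint_Ioc_rpow (by linarith) ha, show (1 - 2*δ) + 1 = 2 - 2*δ by ring]
      _ = ENNReal.ofReal ((lam ^ (2:ℝ) * B) * (a ^ (2 - 2*δ) / (2 - 2*δ))) :=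
          (ENNReal.ofReal_mul (by positivity)).symm
  have h4 : (2:ℝ) ^ (2:ℝ) = 4 := by
    have := Real.rpow_natCast (2:ℝ) 2
    norm_num at this
    linarith
  have hS2 : ∫⁻ x in Ioi a, G x ≤
      ENNReal.ofReal ((4 * B) * (a ^ (-(2*δ)) / (2*δ))) := by
    calc ∫⁻ x in Ioi a, G x
        ≤ ∫⁻ x in Ioi a, ENNReal.ofReal (4 * B) *
            ENNReal.ofReal (x ^ (-1 - 2*δ)) := by
          refine setLIntegral_mono (by fun_prop) fun x hx => ?_
          rw [← ENNReal.ofReal_mul (by positivity)]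
          refine ENNReal.ofReal_le_ofReal ?_
          have hx0 : (0:ℝ) < x := ha.trans hx
          have hmin0 : 0 ≤ min 2 (x*lam) := le_min (by norm_num) (by positivity)
          have h2 : (min 2 (x*lam)) ^ (2:ℝ) ≤ (2:ℝ) ^ (2:ℝ) :=
            Real.rpow_le_rpow hmin0 (min_le_left _ _) (by norm_num)
          calc F x ≤ x ^ (-1 - 2*δ) * ((2:ℝ) ^ (2:ℝ) * B) := by
                refine mul_le_mul_of_nonneg_left ?_ (Real.rpow_nonneg hx0.le _)
                exact mul_le_mul_of_nonneg_right h2 hB0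
            _ = 4 * B * x ^ (-1 - 2*δ) := by rw [h4]; ring
      _ = ENNReal.ofReal (4 * B) * ∫⁻ x in Ioi a,
            ENNReal.ofReal (x ^ (-1 - 2*δ)) := lintegral_const_mul' _ _ ENNReal.ofReal_ne_top
      _ = ENNReal.ofReal (4 * B) * ENNReal.ofReal (a ^ (-(2*δ)) / (2*δ)) := by
          rw [stmt4_lint_Ioi_rpow (by linarith) ha, show (-1 - 2*δ) + 1 = -(2*δ) by ring,
            neg_div_neg_eq]
      _ = ENNReal.ofReal ((4 * B) * (a ^ (-(2*δ)) / (2*δ))) :=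
          (ENNReal.ofReal_mul (by positivity)).symm
  -- Step 4: put everything together
  set L : ℝ := lam ^ (2*δ) with hL_def
  have hL0 : 0 ≤ L := Real.rpow_nonneg hlam0.le _
  have e1 : lam ^ (2:ℝ) * a ^ (2 - 2*δ) = L := by
    rw [ha_def, one_div, ← Real.rpow_neg_one lam, ← Real.rpow_mul hlam0.le,
      ← Real.rpow_add hlam0, hL_def]
    congr 1
    ring
  have e2 : a ^ (-(2*δ)) = L := by
    rw [ha_def, one_div, ← Real.rpow_neg_one lam, ← Real.rpow_mul hlam0.le, hL_def]
    congr 1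
    ring
  have key : 2 * ((lam ^ (2:ℝ) * B) * (a ^ (2 - 2*δ) / (2 - 2*δ)) +
      (4 * B) * (a ^ (-(2*δ)) / (2*δ))) = B * L * (1 / (1 - δ) + 4 / δ) := by
    rw [show (lam ^ (2:ℝ) * B) * (a ^ (2 - 2*δ) / (2 - 2*δ)) =
        B * (lam ^ (2:ℝ) * a ^ (2 - 2*δ)) / (2 - 2*δ) by ring, e1, e2]
    have hδ1' : (1:ℝ) - δ ≠ 0 := by linarith
    have h2δ : (2:ℝ) - 2*δ ≠ 0 := by intro h; apply hδ1'; linarith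
    field_simp
  calc (∫⁻ τ : ℝ, ENNReal.ofReal (|τ| ^ (-1 - 2 * δ)) *
      (∫⁻ t : ℝ, ENNReal.ofReal (‖η t‖ ^ q *
        ‖Complex.exp (Complex.I * (((t + τ) * lam : ℝ) : ℂ)) -
          Complex.exp (Complex.I * ((t * lam : ℝ) : ℂ))‖ ^ q)) ^ (2 / q))
      ≤ 2 * ∫⁻ x in Ioi (0:ℝ), G x := hstep2
    _ ≤ 2 * (ENNReal.ofReal ((lam ^ (2:ℝ) * B) * (a ^ (2 - 2*δ) / (2 - 2*δ))) +
        ENNReal.ofReal ((4 * B) * (a ^ (-(2*δ)) / (2*δ)))) := by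
        rw [hsplit]
        exact mul_le_mul_right (add_le_add hS1 hS2) 2
    _ = ENNReal.ofReal (2 * ((lam ^ (2:ℝ) * B) * (a ^ (2 - 2*δ) / (2 - 2*δ)) +
        (4 * B) * (a ^ (-(2*δ)) / (2*δ)))) := by
        have hn1 : 0 ≤ (lam ^ (2:ℝ) * B) * (a ^ (2 - 2*δ) / (2 - 2*δ)) :=
          mul_nonneg (by positivity)
            (div_nonneg (Real.rpow_nonneg ha.le _) (by linarith))
        have hn2 : 0 ≤ (4 * B) * (a ^ (-(2*δ)) / (2*δ)) := by positivity
        rw [← ENNReal.ofReal_add hn1 hn2,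
          ← ENNReal.ofReal_ofNat 2, ← ENNReal.ofReal_mul (by norm_num)]
    _ ≤ ENNReal.ofReal (Real.sqrt ((B + 1) * (1 / (1 - δ) + 4 / δ)) ^ 2 * L) := by
        refine ENNReal.ofReal_le_ofReal ?_
        rw [key, hC2]
        nlinarith [mul_nonneg hc0.le hL0]
end

section
/- Let k ≥ 1 be an integer and let V : ℝ → ℝ be twice differentiable with V''(t) + (V(t))^{2k+1} = 0 for all t ∈ ℝ, V(0) = 1 and V'(0) = 0. Then V is periodic with period T = 2 √(k+1) ∫_{−1}^{1} (1 − v^{2k+2})^{−1/2} dv; that is, the integral ∫_{−1}^{1} (1 − v^{2k+2})^{−1/2} dv is finite and V(t + T) = V(t) for all t ∈ ℝ. -/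
open MeasureTheory intervalIntegral Set NNReal

private lemma int_aux (k : ℕ) :
    IntervalIntegrable (fun v : ℝ => (1 - v ^ (2 * k + 2)) ^ (-(1 : ℝ) / 2))
      MeasureTheory.volume (-1) 1 := by
  set m := 2 * k + 2 with hm
  have hmeas : Measurable fun v : ℝ => (1 - v ^ m) ^ (-(1 : ℝ) / 2) := by measurability
  have h01 : IntervalIntegrable (fun v : ℝ => (1 - v ^ m) ^ (-(1 : ℝ) / 2)) volume 0 1 := by
    have hg : IntervalIntegrable (fun v : ℝ => (1 - v) ^ (-(1 : ℝ) / 2)) volume 0 1 := by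
      have := (intervalIntegrable_rpow' (a := 0) (b := 1)
        (by norm_num : (-1:ℝ) < -(1:ℝ)/2)).comp_sub_left 1
      simpa using this.symm
    refine hg.mono_fun hmeas.aestronglyMeasurable.restrict ?_
    filter_upwards [ae_restrict_mem measurableSet_uIoc] with v hv
    rw [uIoc_of_le (by norm_num : (0:ℝ) ≤ 1)] at hv
    obtain ⟨h0, h1⟩ := hv
    have hvm : v ^ m ≤ v := by
      calc v ^ m ≤ v ^ 1 := pow_le_pow_of_le_one h0.le h1 (by omega)
      _ = v := pow_one v
    have hvm0 : 0 ≤ 1 - v ^ m := by linarith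
    have h1v : (0:ℝ) ≤ 1 - v := by linarith
    rw [Real.norm_eq_abs, Real.norm_eq_abs, abs_of_nonneg (Real.rpow_nonneg hvm0 _),
      abs_of_nonneg (Real.rpow_nonneg h1v _)]
    rcases eq_or_lt_of_le h1 with h | h
    · subst h
      simp
    · exact Real.rpow_le_rpow_of_nonpos (by linarith) (by linarith) (by norm_num)
  have heven : Even m := ⟨k + 1, by omega⟩
  have hneg : IntervalIntegrable (fun v : ℝ => (1 - v ^ m) ^ (-(1 : ℝ) / 2)) volume (-1) 0 := by
    have := ((IntervalIntegrable.iff_comp_neg).mp h01).symm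
    simpa [heven.neg_pow] using this
  exact hneg.trans h01

private lemma pow_lip (n : ℕ) :
    ∀ x y : ℝ, |x| ≤ 1 → |y| ≤ 1 → |x ^ n - y ^ n| ≤ n * |x - y| := by
  induction n with
  | zero => intro x y _ _; simp
  | succ n ih =>
    intro x y hx hy
    have key : x ^ (n+1) - y ^ (n+1) = x ^ n * (x - y) + y * (x ^ n - y ^ n) := by ring
    have h1 : |x ^ n * (x - y)| ≤ |x - y| := by
      rw [abs_mul, abs_pow]
      nlinarith [abs_nonneg (x - y), pow_le_one₀ (abs_nonneg x) hx (n := n), abs_nonneg x,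
        pow_nonneg (abs_nonneg x) n]
    have h2 : |y * (x ^ n - y ^ n)| ≤ n * |x - y| := by
      rw [abs_mul]
      nlinarith [ih x y hx hy, abs_nonneg y, abs_nonneg (x ^ n - y ^ n)]
    calc |x ^ (n+1) - y ^ (n+1)| ≤ |x ^ n * (x - y)| + |y * (x ^ n - y ^ n)| := by
          rw [key]; exact abs_add_le _ _
      _ ≤ |x - y| + n * |x - y| := add_le_add h1 h2
      _ = (↑(n+1) : ℝ) * |x - y| := by push_cast; ring

private lemma symm_aux (k : ℕ) (V : ℝ → ℝ) (hV : Differentiable ℝ V)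
    (hV' : Differentiable ℝ (deriv V))
    (hode : ∀ t, deriv (deriv V) t + V t ^ (2 * k + 1) = 0)
    (hb1 : ∀ t, |V t| ≤ 1) (hb2 : ∀ t, |deriv V t| ≤ 1)
    (a : ℝ) (ha : deriv V a = 0) : ∀ s, V (2 * a - s) = V s := by
  intro s
  set n := 2 * k + 1 with hn
  set vf : ℝ → ℝ × ℝ → ℝ × ℝ := fun _ p => (p.2, -p.1 ^ n) with hvf
  have hv : ∀ t : ℝ, LipschitzOnWith (n : ℝ≥0) (vf t) (Metric.closedBall (0 : ℝ × ℝ) 1) := by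
    intro t
    rw [lipschitzOnWith_iff_dist_le_mul]
    intro p hp q hq
    simp only [Metric.mem_closedBall, dist_zero_right, Prod.norm_def, max_le_iff] at hp hq
    have hcast : ((n : ℝ≥0) : ℝ) * dist p q = (n : ℝ) * dist p q := by norm_cast
    have hd1 : dist p.1 q.1 ≤ dist p q := by rw [Prod.dist_eq]; exact le_max_left _ _
    have hd2 : dist p.2 q.2 ≤ dist p q := by rw [Prod.dist_eq]; exact le_max_right _ _
    have hn1 : (1 : ℝ) ≤ (n : ℝ) := by exact_mod_cast Nat.one_le_iff_ne_zero.mpr (by omega)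
    rw [show dist (vf t p) (vf t q)
        = max (dist (vf t p).1 (vf t q).1) (dist (vf t p).2 (vf t q).2) from Prod.dist_eq]
    apply max_le
    · rw [hcast]
      calc dist p.2 q.2 ≤ dist p q := hd2
        _ ≤ n * dist p q := le_mul_of_one_le_left dist_nonneg hn1
    · rw [hcast]
      have hpow := pow_lip n p.1 q.1 (by simpa [Real.norm_eq_abs] using hp.1)
        (by simpa [Real.norm_eq_abs] using hq.1)
      simp only [Real.dist_eq] at hd1 ⊢
      calc |(-p.1 ^ n) - (-q.1 ^ n)| = |p.1 ^ n - q.1 ^ n| := by rw [neg_sub_neg, abs_sub_comm]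
        _ ≤ n * |p.1 - q.1| := hpow
        _ ≤ n * dist p q := mul_le_mul_of_nonneg_left hd1 (by positivity)
  set f : ℝ → ℝ × ℝ := fun t => (V t, deriv V t) with hf
  set g : ℝ → ℝ × ℝ := fun t => (V (2 * a - t), -deriv V (2 * a - t)) with hg
  have hf' : ∀ t : ℝ, HasDerivAt f (vf t (f t)) t := by
    intro t
    have h1 : HasDerivAt V (deriv V t) t := (hV t).hasDerivAt
    have h2 : HasDerivAt (deriv V) (deriv (deriv V) t) t := (hV' t).hasDerivAt
    have := h1.prodMk h2
    have he : deriv (deriv V) t = -V t ^ n := by have := hode t; linarith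
    rw [he] at this
    exact this
  have hg' : ∀ t : ℝ, HasDerivAt g (vf t (g t)) t := by
    intro t
    have hin : HasDerivAt (fun t : ℝ => 2 * a - t) (-1) t := by
      simpa using (hasDerivAt_id t).const_sub (2 * a)
    have h1 : HasDerivAt (fun t : ℝ => V (2 * a - t)) (-deriv V (2 * a - t)) t := by
      have := ((hV (2 * a - t)).hasDerivAt).comp t hin
      exact this.congr_deriv (by ring)
    have h2 : HasDerivAt (fun t : ℝ => -deriv V (2 * a - t)) (-(V (2 * a - t)) ^ n) t := by
      have := (((hV' (2 * a - t)).hasDerivAt).comp t hin).neg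
      have he : deriv (deriv V) (2 * a - t) = -V (2 * a - t) ^ n := by
        have := hode (2 * a - t); linarith
      rw [he] at this
      exact this.congr_deriv (by ring)
    have := h1.prodMk h2
    exact this
  have hmem : ∀ u : ℝ → ℝ × ℝ, (∀ t, |((u t).1)| ≤ 1 ∧ |((u t).2)| ≤ 1) →
      ∀ t : ℝ, u t ∈ Metric.closedBall (0 : ℝ × ℝ) 1 := by
    intro u hu t
    simp only [Metric.mem_closedBall, dist_zero_right, Prod.norm_def, max_le_iff,
      Real.norm_eq_abs]
    exact hu t
  have hfmem : ∀ t : ℝ, f t ∈ Metric.closedBall (0 : ℝ × ℝ) 1 :=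
    hmem f (fun t => ⟨hb1 t, hb2 t⟩)
  have hgmem : ∀ t : ℝ, g t ∈ Metric.closedBall (0 : ℝ × ℝ) 1 := by
    apply hmem g
    intro t
    constructor
    · exact hb1 _
    · simpa [hg] using hb2 (2 * a - t)
  have heq : f a = g a := by
    simp only [hf, hg]
    have : 2 * a - a = a := by ring
    rw [this, ha]
    simp
  set R : ℝ := |s - a| + 1 with hR
  have hmemIoo : a ∈ Ioo (a - R) (a + R) := by
    constructor <;> simp [hR] <;> positivity
  have := ODE_solution_unique_of_mem_Icc (v := vf) (s := fun _ => Metric.closedBall (0 : ℝ × ℝ) 1)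
    (fun t _ => hv t) hmemIoo
    (fun t _ => (hf' t).continuousAt.continuousWithinAt)
    (fun t _ => hf' t) (fun t _ => hfmem t)
    (fun t _ => (hg' t).continuousAt.continuousWithinAt)
    (fun t _ => hg' t) (fun t _ => hgmem t) heq
  have hs : s ∈ Icc (a - R) (a + R) := by
    constructor
    · simp [hR]; linarith [neg_abs_le (s - a)]
    · simp [hR]; linarith [le_abs_self (s - a)]
  have := this hs
  have : (f s).1 = (g s).1 := by rw [this]
  simpa [hf, hg] using this.symm

private lemma energy_aux (k : ℕ) (V : ℝ → ℝ) (hV : Differentiable ℝ V)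
    (hV' : Differentiable ℝ (deriv V))
    (hode : ∀ t, deriv (deriv V) t + V t ^ (2 * k + 1) = 0) (hV0 : V 0 = 1)
    (hV'0 : deriv V 0 = 0) :
    ∀ t, ((k : ℝ) + 1) * (deriv V t) ^ 2 + V t ^ (2 * k + 2) = 1 := by
  set E : ℝ → ℝ := fun t => ((k : ℝ) + 1) * (deriv V t) ^ 2 + V t ^ (2 * k + 2) with hE
  have hEd : ∀ t, HasDerivAt E 0 t := by
    intro t
    have h1 : HasDerivAt V (deriv V t) t := (hV t).hasDerivAt
    have h2 : HasDerivAt (deriv V) (deriv (deriv V) t) t := (hV' t).hasDerivAt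
    have hD := ((h2.pow 2).const_mul ((k : ℝ) + 1)).add (h1.pow (2 * k + 2))
    refine hD.congr_deriv ?_
    have hodet := hode t
    have : deriv (deriv V) t = -V t ^ (2 * k + 1) := by linarith
    rw [this]
    push_cast
    ring
  have hconst : ∀ t, E t = E 0 :=
    fun t => is_const_of_deriv_eq_zero (fun x => (hEd x).differentiableAt)
      (fun x => (hEd x).deriv) t 0
  intro t
  simpa [hE, hV0, hV'0] using hconst t

set_option maxHeartbeats 2000000 in
/-- the solution of `V'' + V^{2k+1} = 0`, `V(0) = 1`, `V'(0) = 0` is periodic with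
period `T = 2√(k+1) ∫_{-1}^1 (1 - v^{2k+2})^{-1/2} dv`, the integral being finite. -/
theorem stmt_9 (k : ℕ) (hk : 1 ≤ k) (V : ℝ → ℝ) (hV : Differentiable ℝ V)
    (hV' : Differentiable ℝ (deriv V))
    (hode : ∀ t, deriv (deriv V) t + (V t) ^ (2 * k + 1) = 0)
    (hV0 : V 0 = 1) (hV'0 : deriv V 0 = 0) :
    IntervalIntegrable (fun v : ℝ => (1 - v ^ (2 * k + 2)) ^ (-(1 : ℝ) / 2))
        MeasureTheory.volume (-1) 1 ∧
    ∀ t, V (t + 2 * Real.sqrt ((k : ℝ) + 1) *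
        ∫ v in (-1 : ℝ)..1, (1 - v ^ (2 * k + 2)) ^ (-(1 : ℝ) / 2)) = V t := by
  have hint := int_aux k
  refine ⟨hint, ?_⟩
  set m := 2 * k + 2 with hm
  set fI : ℝ → ℝ := fun v => (1 - v ^ m) ^ (-(1 : ℝ) / 2) with hfI
  set I : ℝ := ∫ v in (-1 : ℝ)..1, fI v with hI
  set c : ℝ := Real.sqrt ((k : ℝ) + 1) with hc
  have hcpos : 0 < c := Real.sqrt_pos.mpr (by positivity)
  have energy := energy_aux k V hV hV' hode hV0 hV'0
  have heven : Even m := ⟨k + 1, by omega⟩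
  have hVb : ∀ t, |V t| ≤ 1 := by
    intro t
    have h := energy t
    have h1 : V t ^ m ≤ 1 := by nlinarith [sq_nonneg (deriv V t)]
    have h2 : |V t| ^ m ≤ 1 := by rwa [heven.pow_abs]
    exact pow_le_one_iff_of_nonneg (abs_nonneg _) (by omega) |>.mp h2
  have hVmnn : ∀ t, 0 ≤ V t ^ m := fun t => heven.pow_nonneg _
  have hV'b : ∀ t, |deriv V t| ≤ 1 := by
    intro t
    have h := energy t
    have h1 : (deriv V t) ^ 2 ≤ 1 := by nlinarith [hVmnn t, Nat.cast_nonneg (α := ℝ) k]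
    exact abs_le_one_iff_mul_self_le_one.mpr (by nlinarith [h1])
  have symm := symm_aux k V hV hV' hode hVb hV'b
  have hVIcc : ∀ t, V t ∈ Icc (-1 : ℝ) 1 := fun t => abs_le.mp (hVb t)
  -- the primitive of fI and the "time from 1 to v" function G
  set P : ℝ → ℝ := fun v => ∫ u in (-1 : ℝ)..v, fI u with hP
  set G : ℝ → ℝ := fun v => c * (I - P v) with hG
  have hIcc : uIcc (-1 : ℝ) 1 = Icc (-1) 1 := uIcc_of_le (by norm_num)
  have hPcont : ContinuousOn P (Icc (-1 : ℝ) 1) := by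
    have := continuousOn_primitive_interval' hint (left_mem_uIcc (a := (-1:ℝ)) (b := 1))
    rwa [hIcc] at this
  have hGcont : ContinuousOn G (Icc (-1 : ℝ) 1) :=
    continuousOn_const.mul (continuousOn_const.sub hPcont)
  have hfInn : ∀ v ∈ Icc (-1 : ℝ) 1, 0 ≤ fI v := by
    intro v hv
    have hvm : v ^ m ≤ 1 := by
      have : |v| ^ m ≤ 1 := pow_le_one₀ (abs_nonneg v) (abs_le.mpr hv)
      rwa [heven.pow_abs] at this
    exact Real.rpow_nonneg (by linarith) _
  have hPnn : ∀ v ∈ Icc (-1 : ℝ) 1, 0 ≤ P v := by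
    intro v hv
    exact intervalIntegral.integral_nonneg hv.1
      (fun u hu => hfInn u ⟨hu.1, le_trans hu.2 hv.2⟩)
  have hP1 : P 1 = I := rfl
  have hPm1 : P (-1) = 0 := integral_same
  have hfImeas : Measurable fI := by measurability
  have hPd : ∀ v ∈ Ioo (-1 : ℝ) 1, HasDerivAt P (fI v) v := by
    intro v hv
    have hbase : 0 < 1 - v ^ m := by
      have h1 : |v| < 1 := abs_lt.mpr hv
      have : |v| ^ m < 1 := pow_lt_one₀ (abs_nonneg v) h1 (by omega)
      rw [heven.pow_abs] at this
      linarith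
    have hcontAt : ContinuousAt fI v := by
      have h1 : ContinuousAt (fun v : ℝ => 1 - v ^ m) v :=
        (continuous_const.sub (continuous_pow m)).continuousAt
      exact h1.rpow_const (Or.inl (by linarith))
    refine integral_hasDerivAt_right (hint.mono_set ?_)
      (hfImeas.stronglyMeasurable.stronglyMeasurableAtFilter) hcontAt
    exact uIcc_subset_uIcc (by rw [hIcc]; exact ⟨le_refl _, by norm_num⟩)
      (by rw [hIcc]; exact ⟨hv.1.le, hv.2.le⟩)
  have hGd : ∀ v ∈ Ioo (-1 : ℝ) 1, HasDerivAt G (-(c * fI v)) v := by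
    intro v hv
    have := ((hPd v hv).const_sub I).const_mul c
    simpa [hG, mul_neg] using this
  -- Key lemma: if deriv V has no zero on (0, d), then G (V d) = d and V decreases on [0, d]
  have L1 : ∀ d : ℝ, 0 < d → (∀ u ∈ Ioo (0 : ℝ) d, deriv V u ≠ 0) →
      G (V d) = d ∧ StrictAntiOn V (Icc 0 d) := by
    intro d hd hne
    have hneg : ∀ u ∈ Ioo (0 : ℝ) d, deriv V u < 0 := by
      by_cases hpos : ∃ w ∈ Ioo (0 : ℝ) d, 0 < deriv V w
      · obtain ⟨w, hw, hwpos⟩ := hpos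
        exfalso
        have hall : ∀ u ∈ Ioo (0 : ℝ) d, 0 < deriv V u := by
          intro u hu
          rcases lt_or_gt_of_ne (hne u hu) with h | h
          · exfalso
            have hcont : ContinuousOn (deriv V) (uIcc u w) := hV'.continuous.continuousOn
            have h0mem : (0 : ℝ) ∈ uIcc (deriv V u) (deriv V w) := by
              rw [mem_uIcc]; left; exact ⟨h.le, hwpos.le⟩
            obtain ⟨z, hz, hz0⟩ := intermediate_value_uIcc hcont h0mem
            have hzmem : z ∈ Ioo (0 : ℝ) d := Set.ordConnected_Ioo.uIcc_subset hu hw hz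
            exact hne z hzmem hz0
          · exact h
        have hmono : StrictMonoOn V (Icc 0 d) :=
          strictMonoOn_of_deriv_pos (convex_Icc 0 d) hV.continuous.continuousOn
            (by rw [interior_Icc]; exact hall)
        have h1 := hmono (left_mem_Icc.mpr hd.le) (right_mem_Icc.mpr hd.le) hd
        rw [hV0] at h1
        have h2 := (hVIcc d).2
        linarith
      · push_neg at hpos
        intro u hu
        exact lt_of_le_of_ne (hpos u hu) (hne u hu)
    have hanti : StrictAntiOn V (Icc 0 d) :=
      strictAntiOn_of_deriv_neg (convex_Icc 0 d) hV.continuous.continuousOn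
        (by rw [interior_Icc]; exact hneg)
    refine ⟨?_, hanti⟩
    have hVrange : ∀ u ∈ Ioo (0 : ℝ) d, V u ∈ Ioo (-1 : ℝ) 1 := by
      intro u hu
      constructor
      · have h1 : V d < V u := hanti ⟨hu.1.le, hu.2.le⟩ (right_mem_Icc.mpr hd.le) hu.2
        have h2 := (hVIcc d).1
        linarith
      · have h1 : V u < V 0 := hanti (left_mem_Icc.mpr hd.le) ⟨hu.1.le, hu.2.le⟩ hu.1
        rwa [hV0] at h1
    set F : ℝ → ℝ := fun t => G (V t) - t with hF
    have hVmaps : MapsTo V (Icc 0 d) (Icc (-1 : ℝ) 1) := fun u _ => hVIcc u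
    have hFcont : ContinuousOn F (Icc 0 d) :=
      (hGcont.comp hV.continuous.continuousOn hVmaps).sub continuousOn_id
    have hFd : ∀ u ∈ Ioo (0 : ℝ) d, HasDerivAt F 0 u := by
      intro u hu
      have hy := hVrange u hu
      have hchain := (hGd (V u) hy).comp u (hV u).hasDerivAt
      have hder := hchain.sub (hasDerivAt_id u)
      have hbase : 0 < 1 - V u ^ m := by
        have h1 : |V u| < 1 := abs_lt.mpr hy
        have : |V u| ^ m < 1 := pow_lt_one₀ (abs_nonneg _) h1 (by omega)
        rw [heven.pow_abs] at this
        linarith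
      have hsq : ((k : ℝ) + 1) * (deriv V u) ^ 2 = 1 - V u ^ m := by
        have := energy u; rw [← hm] at this; linarith
      set w : ℝ := -deriv V u with hw
      have hwpos : 0 < w := by
        rw [hw]; simpa using hneg u hu
      have hcw : c * w = Real.sqrt (1 - V u ^ m) := by
        rw [hc, ← Real.sqrt_sq hwpos.le, ← Real.sqrt_mul (by positivity)]
        congr 1
        rw [hw]
        nlinarith [hsq]
      have hprod : fI (V u) * (c * w) = 1 := by
        rw [hcw, hfI]
        simp only
        rw [Real.sqrt_eq_rpow, ← Real.rpow_add hbase]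
        norm_num
      have hval : -(c * fI (V u)) * deriv V u - 1 = 0 := by
        have hd' : deriv V u = -w := by rw [hw]; ring
        rw [hd']
        nlinarith [hprod]
      rw [← hval]
      exact hder
    have hF0 : F 0 = 0 := by
      simp only [hF, hG, hV0, hP1]
      simp
    have hconst : ∀ x ∈ Icc (0 : ℝ) d, F x = 0 := by
      intro x hx
      rcases eq_or_lt_of_le hx.1 with h0 | h0
      · rw [← h0]; exact hF0
      · have hstep : ∀ ε ∈ Ioo (0 : ℝ) x, F x = F ε := by
          intro ε hε
          have hsub : Icc ε x ⊆ Icc 0 d := Icc_subset_Icc hε.1.le hx.2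
          have := constant_of_has_deriv_right_zero (f := F) (a := ε) (b := x)
            (hFcont.mono hsub)
            (fun u hu => (hFd u ⟨lt_of_lt_of_le hε.1 hu.1,
              lt_of_lt_of_le hu.2 hx.2⟩).hasDerivWithinAt)
          exact this x (right_mem_Icc.mpr hε.2.le)
        haveI hNB : (nhdsWithin (0 : ℝ) (Ioo 0 x)).NeBot := by
          apply mem_closure_iff_nhdsWithin_neBot.mp
          rw [closure_Ioo h0.ne]
          exact ⟨le_refl _, h0.le⟩
        have htend : Filter.Tendsto F (nhdsWithin (0 : ℝ) (Ioo 0 x)) (nhds (F 0)) := by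
          have h1 : ContinuousWithinAt F (Icc 0 d) 0 :=
            hFcont 0 (left_mem_Icc.mpr hd.le)
          exact h1.tendsto.mono_left (nhdsWithin_mono _
            (fun u hu => ⟨hu.1.le, le_trans hu.2.le hx.2⟩))
        have hconst' : Filter.Tendsto F (nhdsWithin (0 : ℝ) (Ioo 0 x)) (nhds (F x)) := by
          apply Filter.Tendsto.congr' _ tendsto_const_nhds
          filter_upwards [self_mem_nhdsWithin] with ε hε
          exact hstep ε hε
        have := tendsto_nhds_unique htend hconst'
        rw [← this, hF0]
    have := hconst d (right_mem_Icc.mpr hd.le)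
    simp only [hF] at this
    linarith
  -- nonnegativity of I
  have hInn : 0 ≤ I := intervalIntegral.integral_nonneg (by norm_num) hfInn
  -- existence of a positive critical point
  have hex : ∃ u ∈ Ioo (0 : ℝ) (c * I + 1), deriv V u = 0 := by
    by_contra hno
    push_neg at hno
    have hL := (L1 (c * I + 1) (by positivity) (fun u hu => hno u hu)).1
    have hle : G (V (c * I + 1)) ≤ c * I := by
      have hP0 : 0 ≤ P (V (c * I + 1)) := hPnn _ (hVIcc _)
      have hGeq : G (V (c * I + 1)) = c * (I - P (V (c * I + 1))) := by rw [hG]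
      rw [hGeq]
      nlinarith
    linarith
  -- no critical points near 0
  have hdd0 : HasDerivAt (deriv V) (-1) 0 := by
    have h2 := (hV' 0).hasDerivAt
    have he : deriv (deriv V) 0 = -1 := by
      have h := hode 0
      rw [hV0] at h
      simp at h
      linarith
    rwa [he] at h2
  have hδ : ∃ δ > 0, ∀ t : ℝ, t ≠ 0 → |t| < δ → deriv V t ≠ 0 := by
    have hslope := hasDerivAt_iff_tendsto_slope.mp hdd0
    have hev : ∀ᶠ z in nhdsWithin 0 {(0 : ℝ)}ᶜ, slope (deriv V) 0 z < 0 :=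
      hslope.eventually_lt_const (by norm_num)
    rw [eventually_nhdsWithin_iff, Metric.eventually_nhds_iff] at hev
    obtain ⟨δ, hδpos, hδ'⟩ := hev
    refine ⟨δ, hδpos, fun t ht htδ h0 => ?_⟩
    have hs : slope (deriv V) 0 t < 0 := by
      apply hδ' (by rwa [Real.dist_eq, sub_zero])
      simpa using ht
    rw [slope_def_field, h0, hV'0] at hs
    simp at hs
  obtain ⟨u₀, hu₀mem, hu₀⟩ := hex
  obtain ⟨δ, hδpos, hδ⟩ := hδ
  set Z : Set ℝ := {t | δ ≤ t ∧ deriv V t = 0} with hZ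
  have hZne : Z.Nonempty := by
    refine ⟨u₀, ?_, hu₀⟩
    by_contra h
    push_neg at h
    exact hδ u₀ hu₀mem.1.ne' (by rwa [abs_of_pos hu₀mem.1]) hu₀
  have hZclosed : IsClosed Z := by
    have : Z = Ici δ ∩ deriv V ⁻¹' {0} := by ext t; simp [hZ, mem_Ici]
    rw [this]
    exact isClosed_Ici.inter (isClosed_singleton.preimage hV'.continuous)
  have hZbdd : BddBelow Z := ⟨δ, fun t ht => ht.1⟩
  set b : ℝ := sInf Z with hb
  have hbZ : b ∈ Z := hZclosed.csInf_mem hZne hZbdd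
  have hbpos : 0 < b := lt_of_lt_of_le hδpos hbZ.1
  have hbzero : deriv V b = 0 := hbZ.2
  have hbne : ∀ u ∈ Ioo (0 : ℝ) b, deriv V u ≠ 0 := by
    intro u hu h0
    have huδ : δ ≤ u := by
      by_contra h
      push_neg at h
      exact hδ u hu.1.ne' (by rwa [abs_of_pos hu.1]) h0
    have : b ≤ u := csInf_le hZbdd ⟨huδ, h0⟩
    linarith [hu.2]
  obtain ⟨hGb, hanti⟩ := L1 b hbpos hbne
  have hVbm1 : V b = -1 := by
    have h := energy b
    rw [hbzero] at h
    have hm1 : V b ^ m = 1 := by rw [hm]; nlinarith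
    have hlt : V b < 1 := by
      have := hanti (left_mem_Icc.mpr hbpos.le) (right_mem_Icc.mpr hbpos.le) hbpos
      rwa [hV0] at this
    have hge : -1 ≤ V b := (hVIcc b).1
    rcases eq_or_lt_of_le hge with h1 | h1
    · exact h1.symm
    · exfalso
      have habs : |V b| < 1 := abs_lt.mpr ⟨h1, hlt⟩
      have habs' : |V b| ^ m < 1 := pow_lt_one₀ (abs_nonneg _) habs (by omega)
      rw [heven.pow_abs, hm1] at habs'
      linarith
  have hbCI : b = c * I := by
    rw [hVbm1] at hGb
    rw [hG] at hGb
    simp only at hGb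
    rw [hPm1] at hGb
    linarith
  intro t
  have h1 := symm b hbzero (-t)
  have h2 := symm 0 hV'0 t
  rw [show t + 2 * c * I = 2 * b - -t from by rw [hbCI]; ring, h1]
  simpa using h2
end

section
/- Let d ≥ 1. Let ψ : ℝ^d → ℝ be smooth with compact support and such that ψ(x) > 0 for every x with ‖x‖ < 1. Let W : ℝ → ℝ be continuous, periodic (there exists p > 0 with W(v + p) = W(v) for all v ∈ ℝ), and not identically zero. Then there exist c₀ > 0 and λ₀ > 0 such that for every λ ≥ λ₀, ∫_{ℝ^d} ψ(x)² · W(λ ψ(x))² dx ≥ c₀². -/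
open MeasureTheory intervalIntegral Set

lemma aux_Kpos (W : ℝ → ℝ) (hW : Continuous W) (p : ℝ) (hp : 0 < p)
    (hper : ∀ v, W (v + p) = W v) (hW0 : ∃ v, W v ≠ 0) :
    0 < ∫ v in (0:ℝ)..p, (W v)^2 := by
  obtain ⟨v₀, hv₀⟩ := hW0
  have hWsq : Continuous fun v => (W v)^2 := (hW.pow 2)
  have hperiodic : Function.Periodic (fun v => (W v)^2) p := fun v => by simp [hper v]
  have hshift := hperiodic.intervalIntegral_add_eq (v₀ - p/2) 0
  rw [zero_add] at hshift
  rw [← hshift]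
  have hpos : 0 < (W v₀)^2 := by positivity
  have hcont : ∀ᶠ v in nhds v₀, (W v₀)^2/2 < (W v)^2 :=
    (hWsq.continuousAt (x := v₀)).eventually_const_lt (by linarith)
  obtain ⟨δ, hδ, hball⟩ := Metric.eventually_nhds_iff.1 hcont
  set ε := min (δ/2) (p/2) with hε
  have hε0 : 0 < ε := by positivity
  have hεδ : ε < δ := by
    have := min_le_left (δ/2) (p/2); simp only [← hε] at this; linarith
  have hεp : ε ≤ p/2 := min_le_right _ _
  have key : (W v₀)^2/2 * ((v₀ + ε) - (v₀ - ε)) ≤ ∫ v in (v₀-ε)..(v₀+ε), (W v)^2 := by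
    have := intervalIntegral.integral_mono_on (a := v₀ - ε) (b := v₀ + ε)
      (f := fun _ => (W v₀)^2/2) (g := fun v => (W v)^2) (by linarith)
      (intervalIntegrable_const (μ := volume)) (hWsq.intervalIntegrable _ _)
      (fun x hx => le_of_lt (hball (by
        rw [Real.dist_eq]
        rw [abs_lt]
        constructor <;> [skip; skip] <;>
          · rcases hx with ⟨h1, h2⟩; linarith)))
    rw [intervalIntegral.integral_const, smul_eq_mul] at this; linarith
  have hsub : ∫ v in (v₀-ε)..(v₀+ε), (W v)^2 ≤ ∫ v in (v₀ - p/2)..(v₀ - p/2 + p), (W v)^2 := by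
    apply intervalIntegral.integral_mono_interval (by linarith) (by linarith) (by linarith)
    · filter_upwards with x using by positivity
    · exact hWsq.intervalIntegrable _ _
  have : 0 < (W v₀)^2/2 * ((v₀ + ε) - (v₀ - ε)) := by ring_nf; positivity
  linarith

lemma aux_block (W : ℝ → ℝ) (hW : Continuous W) (p : ℝ) (hp : 0 < p)
    (hper : ∀ v, W (v + p) = W v)
    {c ℓ lam : ℝ} (hℓ : 0 < ℓ) (hlam : 2*p/ℓ ≤ lam) :
    ℓ * (∫ v in (0:ℝ)..p, (W v)^2) / (2*p) ≤ ∫ s in c..c+ℓ, (W (lam * s))^2 := by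
  set K := ∫ v in (0:ℝ)..p, (W v)^2 with hKdef
  have hKnn : 0 ≤ K := by
    rw [hKdef]
    apply intervalIntegral.integral_nonneg hp.le
    intro x _; positivity
  have hWsq : Continuous fun v => (W v)^2 := hW.pow 2
  have hperiodic : Function.Periodic (fun v => (W v)^2) p := fun v => by simp [hper v]
  have hlam0 : 0 < lam := lt_of_lt_of_le (by positivity) hlam
  have hlamℓ : 2*p ≤ lam * ℓ := by
    rw [div_le_iff₀ hℓ] at hlam; linarith
  have hcv : lam * ∫ s in c..c+ℓ, (W (lam * s))^2 = ∫ u in lam*c..lam*(c+ℓ), (W u)^2 :=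
    intervalIntegral.mul_integral_comp_mul_left (f := fun u => (W u)^2) (a := c) (b := c + ℓ) (c := lam)
  set n : ℤ := ⌊lam * ℓ / p⌋ with hn
  have hn1 : (1:ℤ) ≤ n := by
    apply Int.le_floor.2
    push_cast
    rw [le_div_iff₀ hp]; linarith
  have hnp : (n:ℝ) * p ≤ lam * ℓ := by
    have h := Int.floor_le (lam * ℓ / p)
    calc (n:ℝ) * p ≤ (lam * ℓ / p) * p := mul_le_mul_of_nonneg_right h hp.le
      _ = lam * ℓ := by field_simp
  have hnge : lam * ℓ / p - 1 ≤ (n:ℝ) := (Int.sub_one_lt_floor _).le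
  have hblock : ∫ u in lam*c..lam*c + n • p, (W u)^2 = (n:ℝ) * K := by
    rw [hperiodic.intervalIntegral_add_zsmul_eq n (lam*c) (fun t₁ t₂ => hWsq.intervalIntegrable _ _),
      hperiodic.intervalIntegral_add_eq (lam*c) 0, zero_add, ← hKdef]
    simp [zsmul_eq_mul]
  have hmono : ∫ u in lam*c..lam*c + n • p, (W u)^2 ≤ ∫ u in lam*c..lam*(c+ℓ), (W u)^2 := by
    apply intervalIntegral.integral_mono_interval (le_refl (lam*c))
    · have h0 : (0:ℝ) ≤ (n:ℝ) * p := by positivity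
      rw [zsmul_eq_mul]; linarith
    · rw [zsmul_eq_mul]; nlinarith
    · filter_upwards with x using by positivity
    · exact hWsq.intervalIntegrable _ _
  have hfinal : (n:ℝ) * K ≤ lam * ∫ s in c..c+ℓ, (W (lam * s))^2 := by
    rw [hcv]; linarith
  have h1 : (lam * ℓ / p - 1) * K ≤ (n:ℝ) * K := mul_le_mul_of_nonneg_right hnge hKnn
  have hI : (lam * ℓ / p - 1) * K ≤ lam * ∫ s in c..c+ℓ, (W (lam * s))^2 := le_trans h1 hfinal
  have key : lam * (ℓ * K / (2*p)) ≤ (lam * ℓ / p - 1) * K := by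
    have e : (lam*ℓ/p - 1)*K - lam*(ℓ*K/(2*p)) = (lam*ℓ - 2*p)*K/(2*p) := by
      field_simp; ring
    have hnn : 0 ≤ (lam*ℓ - 2*p)*K/(2*p) := by
      apply div_nonneg (mul_nonneg (by linarith) hKnn) (by linarith)
    linarith
  have hfin : lam * (ℓ * K / (2*p)) ≤ lam * ∫ s in c..c+ℓ, (W (lam * s))^2 := le_trans key hI
  exact le_of_mul_le_mul_left hfin hlam0

lemma aux_core1d (W : ℝ → ℝ) (hW : Continuous W) (p : ℝ) (hp : 0 < p)
    (hper : ∀ v, W (v + p) = W v)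
    (f f' : ℝ → ℝ) (a b : ℝ) (hab : a < b)
    (hf : ∀ t, HasDerivAt f (f' t) t) (hf'c : Continuous f')
    (m M s₁ : ℝ) (hm : 0 < m) (hM : 0 < M) (hs₁ : 0 < s₁)
    (hup : ∀ t ∈ Set.Icc a b, f' t ≤ -m)
    (hlo : ∀ t ∈ Set.Icc a b, -M ≤ f' t)
    (hfs : ∀ t ∈ Set.Icc a b, s₁ ≤ f t)
    (lam : ℝ) (hlam : 2*p/(m*(b-a)) ≤ lam) :
    s₁^2 / M * (m*(b-a) * (∫ v in (0:ℝ)..p, (W v)^2) / (2*p))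
      ≤ ∫ t in a..b, (f t)^2 * (W (lam * f t))^2 := by
  set K := ∫ v in (0:ℝ)..p, (W v)^2 with hKdef
  have hKnn : 0 ≤ K := by
    rw [hKdef]; apply intervalIntegral.integral_nonneg hp.le; intro x _; positivity
  have hgc : Continuous (fun s => (W (lam * s))^2) :=
    (hW.comp (continuous_const.mul continuous_id)).pow 2
  have hcf : Continuous f := continuous_iff_continuousAt.2 fun t => (hf t).continuousAt
  have hgfc : Continuous (fun t => (W (lam * f t))^2) := hgc.comp hcf
  have hcv : ∫ t in a..b, f' t • (W (lam * f t))^2 = ∫ u in f a..f b, (W (lam * u))^2 :=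
    intervalIntegral.integral_comp_smul_deriv (fun t _ => hf t) hf'c.continuousOn hgc
  have hftc : ∫ t in a..b, f' t = f b - f a :=
    intervalIntegral.integral_eq_sub_of_hasDerivAt (fun t _ => hf t)
      (hf'c.intervalIntegrable _ _)
  have hfb_fa : f b - f a ≤ -m * (b - a) := by
    rw [← hftc]
    have h := intervalIntegral.integral_mono_on hab.le (hf'c.intervalIntegrable a b)
      (intervalIntegrable_const (μ := volume)) hup
    rw [intervalIntegral.integral_const, smul_eq_mul] at h
    linarith
  set ℓ := m * (b - a) with hℓdef
  have hℓ : 0 < ℓ := mul_pos hm (by linarith)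
  have hint1 : f b + ℓ ≤ f a := by simp only [hℓdef] at *; linarith
  have hblock : ℓ * K / (2*p) ≤ ∫ s in (f b)..(f b)+ℓ, (W (lam * s))^2 :=
    aux_block W hW p hp hper hℓ hlam
  have hwiden : ∫ s in (f b)..(f b)+ℓ, (W (lam * s))^2
      ≤ ∫ s in (f b)..(f a), (W (lam * s))^2 := by
    apply intervalIntegral.integral_mono_interval (le_refl (f b)) (by linarith) (by linarith)
    · filter_upwards with x using by positivity
    · exact hgc.intervalIntegrable _ _
  have hrev : ∫ t in a..b, (-(f' t)) * (W (lam * f t))^2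
      = ∫ s in (f b)..(f a), (W (lam * s))^2 := by
    have e : (fun t => (-(f' t)) * (W (lam * f t))^2)
        = fun t => -(f' t • (W (lam * f t))^2) := by
      funext t; simp [smul_eq_mul]
    rw [e, intervalIntegral.integral_neg, hcv, intervalIntegral.integral_symm, neg_neg]
  have h4 : ∫ t in a..b, (-(f' t)) * (W (lam * f t))^2
      ≤ ∫ t in a..b, M * (W (lam * f t))^2 := by
    apply intervalIntegral.integral_mono_on hab.le
      ((hf'c.neg.mul hgfc).intervalIntegrable _ _)
      ((continuous_const.mul hgfc).intervalIntegrable _ _)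
    intro t ht
    have h1 : -(f' t) ≤ M := by have := hlo t ht; linarith
    exact mul_le_mul_of_nonneg_right h1 (by positivity)
  have h5 : ∫ t in a..b, M * (W (lam * f t))^2 = M * ∫ t in a..b, (W (lam * f t))^2 :=
    intervalIntegral.integral_const_mul _ _
  have h6 : ∫ t in a..b, s₁^2 * (W (lam * f t))^2
      ≤ ∫ t in a..b, (f t)^2 * (W (lam * f t))^2 := by
    apply intervalIntegral.integral_mono_on hab.le
      ((continuous_const.mul hgfc).intervalIntegrable _ _)
      (((hcf.pow 2).mul hgfc).intervalIntegrable _ _)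
    intro t ht
    have h1 : s₁^2 ≤ (f t)^2 := by
      have := hfs t ht
      nlinarith
    exact mul_le_mul_of_nonneg_right h1 (by positivity)
  have h7 : ∫ t in a..b, s₁^2 * (W (lam * f t))^2
      = s₁^2 * ∫ t in a..b, (W (lam * f t))^2 := intervalIntegral.integral_const_mul _ _
  have hG : ℓ * K / (2*p) ≤ M * ∫ t in a..b, (W (lam * f t))^2 := by linarith
  have hnnI : 0 ≤ ∫ t in a..b, (W (lam * f t))^2 := by
    apply intervalIntegral.integral_nonneg hab.le; intro x _; positivity
  have step : s₁^2 / M * (ℓ * K / (2*p)) ≤ s₁^2 * ∫ t in a..b, (W (lam * f t))^2 := by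
    have := mul_le_mul_of_nonneg_left hG (le_of_lt (by positivity : (0:ℝ) < s₁^2 / M))
    calc s₁^2 / M * (ℓ * K / (2*p)) ≤ s₁^2 / M * (M * ∫ t in a..b, (W (lam * f t))^2) := this
      _ = s₁^2 * ∫ t in a..b, (W (lam * f t))^2 := by field_simp
  linarith


noncomputable def E (k : ℕ) : (ℝ × (Fin k → ℝ)) ≃ᵐ EuclideanSpace ℝ (Fin (k+1)) :=
  ((MeasurableEquiv.piFinSuccAbove (fun _ : Fin (k+1) => ℝ) 0).symm).trans
    ((MeasurableEquiv.toLp 2 (Fin (k+1) → ℝ)).symm).symm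

lemma E_zero (k : ℕ) (q : ℝ × (Fin k → ℝ)) : E k q 0 = q.1 := by
  simp [E, MeasurableEquiv.piFinSuccAbove, MeasurableEquiv.toLp]
  rfl

lemma E_succ (k : ℕ) (q : ℝ × (Fin k → ℝ)) (j : Fin k) : E k q j.succ = q.2 j := by
  simp [E, MeasurableEquiv.piFinSuccAbove, MeasurableEquiv.toLp]
  rfl

lemma E_smooth (k : ℕ) : ContDiff ℝ (⊤ : ℕ∞) (fun q : ℝ × (Fin k → ℝ) => (E k) q) := by
  have h : (fun q : ℝ × (Fin k → ℝ) => (E k) q)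
      = (fun y : Fin (k+1) → ℝ => (EuclideanSpace.equiv (Fin (k+1)) ℝ).symm y)
        ∘ (fun q : ℝ × (Fin k → ℝ) => Fin.cons q.1 q.2) := by
    funext q
    apply (EuclideanSpace.equiv (Fin (k+1)) ℝ).injective
    funext j
    have : (EuclideanSpace.equiv (Fin (k+1)) ℝ) (E k q) j = E k q j := rfl
    rw [Function.comp_apply]
    simp only [ContinuousLinearEquiv.apply_symm_apply]
    rw [this]
    induction j using Fin.cases with
    | zero => rw [E_zero]; simp
    | succ i => rw [E_succ]; simp
  rw [h]
  apply ContDiff.comp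
  · exact (EuclideanSpace.equiv (Fin (k+1)) ℝ).symm.contDiff
  · apply contDiff_pi.2
    intro j
    induction j using Fin.cases with
    | zero => simpa using contDiff_fst
    | succ i =>
        simp only [Fin.cons_succ]
        exact (ContinuousLinearMap.proj (R := ℝ) (φ := fun _ : Fin k => ℝ) i).contDiff.comp contDiff_snd

lemma E_norm_sq (k : ℕ) (q : ℝ × (Fin k → ℝ)) :
    ‖E k q‖^2 = q.1^2 + ∑ j, (q.2 j)^2 := by
  rw [EuclideanSpace.norm_eq]
  rw [Real.sq_sqrt (by positivity)]
  rw [Fin.sum_univ_succ]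
  simp [E_zero, E_succ, sq_abs]

/-- geometric lower bound `∫_{ℝ^d} ψ(x)² W(λψ(x))² dx ≥ c₀²` for large `λ`,
where `ψ` is smooth, compactly supported and positive on the unit ball, and `W` is
continuous, periodic and not identically zero. -/
theorem stmt_11 (d : ℕ) (hd : 1 ≤ d) (ψ : EuclideanSpace ℝ (Fin d) → ℝ)
    (hψ : ContDiff ℝ (⊤ : ℕ∞) ψ) (hsupp : HasCompactSupport ψ)
    (hpos : ∀ x : EuclideanSpace ℝ (Fin d), ‖x‖ < 1 → 0 < ψ x)
    (W : ℝ → ℝ) (hW : Continuous W) (p : ℝ) (hp : 0 < p) (hper : ∀ v, W (v + p) = W v)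
    (hW0 : ∃ v, W v ≠ 0) :
    ∃ c₀ : ℝ, 0 < c₀ ∧ ∃ lam₀ : ℝ, 0 < lam₀ ∧ ∀ lam : ℝ, lam₀ ≤ lam →
      c₀ ^ 2 ≤ ∫ x : EuclideanSpace ℝ (Fin d), (ψ x) ^ 2 * (W (lam * ψ x)) ^ 2 := by
  obtain ⟨k, rfl⟩ : ∃ k, d = k + 1 := ⟨d - 1, (Nat.succ_pred_eq_of_pos hd).symm⟩
  set K := ∫ v in (0:ℝ)..p, (W v)^2 with hKdef
  have hKpos : 0 < K := aux_Kpos W hW p hp hper hW0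
  have hmp : MeasurePreserving (E k) volume volume :=
    ((EuclideanSpace.volume_preserving_symm_measurableEquiv_toLp (Fin (k+1))).symm _).comp
      ((MeasureTheory.volume_preserving_piFinSuccAbove (fun _ : Fin (k+1) => ℝ) 0).symm _)
  set B : ℝ × (Fin k → ℝ) → ℝ := fun q => ψ (E k q) with hBdef
  have hB : ContDiff ℝ (⊤ : ℕ∞) B := hψ.comp (E_smooth k)
  set D : ℝ × (Fin k → ℝ) → ℝ := fun q => fderiv ℝ B q (1, (0 : Fin k → ℝ)) with hDdef
  have hDc : Continuous D := (hB.continuous_fderiv (by simp)).clm_apply continuous_const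
  have hDeriv : ∀ (t : ℝ) (x' : Fin k → ℝ), HasDerivAt (fun s => B (s, x')) (D (t, x')) t := by
    intro t x'
    have h1 : HasDerivAt (fun s : ℝ => (s, x')) ((1:ℝ), (0 : Fin k → ℝ)) t :=
      (hasDerivAt_id t).prodMk (hasDerivAt_const t x')
    exact (hB.differentiable (by simp) (t, x')).hasFDerivAt.comp_hasDerivAt t h1
  -- norms
  have habs : ∀ q : ℝ × (Fin k → ℝ), |q.1| ≤ ‖E k q‖ := by
    intro q
    have hsum : (0:ℝ) ≤ ∑ j, (q.2 j)^2 := Finset.sum_nonneg fun j _ => by positivity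
    have h1 : q.1^2 ≤ ‖E k q‖^2 := by rw [E_norm_sq]; linarith
    calc |q.1| = Real.sqrt (q.1^2) := (Real.sqrt_sq_eq_abs q.1).symm
      _ ≤ Real.sqrt (‖E k q‖^2) := Real.sqrt_le_sqrt h1
      _ = ‖E k q‖ := Real.sqrt_sq (norm_nonneg _)
  have hzeronorm : ∀ t : ℝ, ‖E k (t, (0 : Fin k → ℝ))‖ = |t| := by
    intro t
    have h := E_norm_sq k (t, (0 : Fin k → ℝ))
    simp only [Pi.zero_apply, ne_eq, OfNat.ofNat_ne_zero, not_false_eq_true, zero_pow,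
      Finset.sum_const_zero, add_zero] at h
    rw [show ‖E k (t, (0 : Fin k → ℝ))‖ = Real.sqrt (‖E k (t, (0 : Fin k → ℝ))‖^2) from
      (Real.sqrt_sq (norm_nonneg _)).symm, h, Real.sqrt_sq_eq_abs]
  -- support radius
  obtain ⟨R, hR⟩ := (Metric.isBounded_iff_subset_closedBall 0).1 hsupp.isBounded
  have hψzero : ∀ x : EuclideanSpace ℝ (Fin (k+1)), R < ‖x‖ → ψ x = 0 := by
    intro x hx
    apply image_eq_zero_of_notMem_tsupport
    intro hmem
    have h := hR hmem
    rw [Metric.mem_closedBall, dist_zero_right] at h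
    linarith
  -- 1D analysis
  set g : ℝ → ℝ := fun t => B (t, (0 : Fin k → ℝ)) with hgdef
  have hgc : Continuous g := hB.continuous.comp (continuous_id.prodMk continuous_const)
  have hg0 : 0 < g 0 := by
    apply hpos
    rw [hzeronorm 0]
    simp
  set R₁ : ℝ := max R 0 + 1 with hR₁
  have hR₁pos : 0 < R₁ := by
    have := le_max_right R 0
    simp only [hR₁]; linarith
  have hgR : g R₁ = 0 := by
    apply hψzero
    rw [hzeronorm]
    rw [abs_of_pos hR₁pos]
    have := le_max_left R 0
    simp only [hR₁]; linarith
  set A : Set ℝ := Set.Icc 0 R₁ ∩ g ⁻¹' (Set.Iic (g 0 / 2)) with hA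
  have hAne : A.Nonempty := ⟨R₁, ⟨hR₁pos.le, le_refl _⟩, by
    simp only [Set.mem_preimage, Set.mem_Iic, hgR]; linarith⟩
  have hAclosed : IsClosed A := isClosed_Icc.inter (isClosed_Iic.preimage hgc)
  have hAbdd : BddBelow A := ⟨0, fun t ht => ht.1.1⟩
  set b := sInf A with hbdef
  have hbA : b ∈ A := hAclosed.csInf_mem hAne hAbdd
  have hb0 : 0 < b := by
    rcases lt_or_eq_of_le hbA.1.1 with h | h
    · exact h
    · exfalso
      have h0A : (0:ℝ) ∈ A := h ▸ hbA
      have := h0A.2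
      simp only [Set.mem_preimage, Set.mem_Iic] at this
      linarith
  have hgbig : ∀ t, 0 ≤ t → t < b → g 0 / 2 < g t := by
    intro t ht0 htb
    by_contra hcon
    push_neg at hcon
    have htA : t ∈ A := ⟨⟨ht0, le_trans htb.le hbA.1.2⟩, hcon⟩
    exact absurd (csInf_le hAbdd htA) (not_le.2 htb)
  obtain ⟨t₀, ht₀, hslope⟩ := exists_hasDerivAt_eq_slope g (fun t => D (t, (0 : Fin k → ℝ)))
    hb0 hgc.continuousOn (fun t _ => hDeriv t 0)
  have hgb : g b ≤ g 0 / 2 := by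
    have := hbA.2
    simpa using this
  have hDneg : D (t₀, (0 : Fin k → ℝ)) < 0 := by
    rw [hslope, sub_zero]
    apply div_neg_of_neg_of_pos _ hb0
    linarith
  have hgt₀ : g 0 / 2 < g t₀ := hgbig t₀ ht₀.1.le ht₀.2
  -- neighborhood
  set q₀ : ℝ × (Fin k → ℝ) := (t₀, (0 : Fin k → ℝ)) with hq₀
  set m : ℝ := -D q₀ / 2 with hmdef
  set M : ℝ := 1 - D q₀ with hMdef
  set s₁ : ℝ := B q₀ / 2 with hs₁def
  have hm : 0 < m := by simp only [hmdef]; linarith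
  have hMpos : 0 < M := by simp only [hMdef]; linarith
  have hBq₀ : 0 < B q₀ := lt_trans (by linarith) hgt₀
  have hs₁pos : 0 < s₁ := by simp only [hs₁def]; linarith
  set V : Set (ℝ × (Fin k → ℝ)) :=
    {q | D q < -m} ∩ {q | D q₀ - 1 < D q} ∩ {q | s₁ < B q} with hV
  have hVopen : IsOpen V :=
    (((isOpen_lt hDc continuous_const).inter (isOpen_lt continuous_const hDc)).inter
      (isOpen_lt continuous_const hB.continuous))
  have hq₀V : q₀ ∈ V := by
    refine ⟨⟨?_, ?_⟩, ?_⟩ <;> simp only [Set.mem_setOf_eq, hmdef, hs₁def] <;> linarith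
  obtain ⟨r, hr0, hball⟩ := Metric.isOpen_iff.1 hVopen q₀ hq₀V
  have hmem : ∀ (t : ℝ) (x' : Fin k → ℝ), |t - t₀| < r → ‖x'‖ < r → (t, x') ∈ V := by
    intro t x' h1 h2
    apply hball
    rw [Metric.mem_ball, Prod.dist_eq]
    apply max_lt
    · rw [Real.dist_eq]; exact h1
    · rw [dist_eq_norm]
      simpa [hq₀] using h2
  -- constants
  set c₁ : ℝ := s₁^2 / M * (m*(r/2) * K/(2*p)) with hc₁def
  have hc₁pos : 0 < c₁ := by
    apply mul_pos (by positivity)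
    apply div_pos _ (by linarith)
    apply mul_pos (by positivity) hKpos
  set S : Set (Fin k → ℝ) := Metric.ball (0 : Fin k → ℝ) (r/2) with hSdef
  have hSfin : volume S ≠ ⊤ := measure_ball_lt_top.ne
  have hSpos : 0 < (volume S).toReal :=
    ENNReal.toReal_pos (Metric.measure_ball_pos volume _ (by linarith)).ne' hSfin
  set lam₀ : ℝ := 2*p/(m*(r/2)) with hlam₀def
  have hlam₀pos : 0 < lam₀ := by
    apply div_pos (by linarith)
    positivity
  refine ⟨Real.sqrt (c₁ * (volume S).toReal), Real.sqrt_pos.2 (by positivity), lam₀, hlam₀pos, ?_⟩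
  intro lam hlam
  rw [Real.sq_sqrt (by positivity)]
  -- the integrand
  set F : EuclideanSpace ℝ (Fin (k+1)) → ℝ := fun x => (ψ x)^2 * (W (lam * ψ x))^2 with hFdef
  have hFc : Continuous F :=
    (hψ.continuous.pow 2).mul
      ((hW.comp (continuous_const.mul hψ.continuous)).pow 2)
  have hFsupp : HasCompactSupport F := by
    apply HasCompactSupport.intro hsupp
    intro x hx
    simp only [hFdef, image_eq_zero_of_notMem_tsupport hx]
    ring
  have hFint : Integrable F volume := hFc.integrable_of_hasCompactSupport hFsupp
  have hGint : Integrable (F ∘ (E k)) volume :=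
    (hmp.integrable_comp_emb (E k).measurableEmbedding).2 hFint
  have heq : (∫ x, F x) = ∫ q, F (E k q) := (hmp.integral_comp (E k).measurableEmbedding F).symm
  have hGint' : Integrable (fun q : ℝ × (Fin k → ℝ) => F (E k q)) (volume.prod volume) := by
    rw [← Measure.volume_eq_prod]; exact hGint
  have hfub : (∫ q : ℝ × (Fin k → ℝ), F (E k q)) = ∫ x', ∫ t, F (E k (t, x')) := by
    rw [Measure.volume_eq_prod (α := ℝ) (β := Fin k → ℝ)]
    exact integral_prod_symm _ hGint'
  -- core bound for each x' in S
  have hcore : ∀ x' : Fin k → ℝ, ‖x'‖ < r/2 →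
      c₁ ≤ ∫ t in t₀..(t₀ + r/2), (B (t,x'))^2 * (W (lam * B (t,x')))^2 := by
    intro x' hx'
    have hVmem : ∀ t ∈ Set.Icc t₀ (t₀ + r/2), (t, x') ∈ V := by
      intro t ht
      apply hmem t x' _ (by linarith)
      rw [abs_sub_lt_iff]
      constructor <;> [rcases ht with ⟨h1, h2⟩; rcases ht with ⟨h1, h2⟩] <;> linarith
    have hup : ∀ t ∈ Set.Icc t₀ (t₀ + r/2), D (t, x') ≤ -m :=
      fun t ht => ((hVmem t ht).1.1).le
    have hlo : ∀ t ∈ Set.Icc t₀ (t₀ + r/2), -M ≤ D (t, x') := by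
      intro t ht
      have := (hVmem t ht).1.2
      simp only [Set.mem_setOf_eq] at this
      simp only [hMdef]; linarith
    have hfs : ∀ t ∈ Set.Icc t₀ (t₀ + r/2), s₁ ≤ B (t, x') :=
      fun t ht => ((hVmem t ht).2).le
    have hDc' : Continuous fun t => D (t, x') :=
      hDc.comp (continuous_id.prodMk continuous_const)
    have hba : (t₀ + r/2) - t₀ = r/2 := by ring
    have hlam' : 2*p/(m*((t₀ + r/2) - t₀)) ≤ lam := by rw [hba]; exact hlam
    have := aux_core1d W hW p hp hper (fun t => B (t, x')) (fun t => D (t, x'))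
      t₀ (t₀ + r/2) (by linarith) (fun t => hDeriv t x') hDc'
      m M s₁ hm hMpos hs₁pos hup hlo hfs lam hlam'
    rw [hba] at this
    exact this
  -- inner integral over ℝ
  have hinner : ∀ x' : Fin k → ℝ, ‖x'‖ < r/2 → c₁ ≤ ∫ t, F (E k (t, x')) := by
    intro x' hx'
    have hcont : Continuous fun t => F (E k (t, x')) :=
      hFc.comp ((E_smooth k).continuous.comp (continuous_id.prodMk continuous_const))
    have hsuppt : HasCompactSupport fun t => F (E k (t, x')) := by
      apply HasCompactSupport.intro (isCompact_Icc (a := -R₁) (b := R₁))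
      intro t ht
      have habs' : R₁ < |t| := by
        by_contra h'
        push_neg at h'
        exact ht (abs_le.1 h')
      have hRlt : R < ‖E k (t, x')‖ := by
        have h1 : |t| ≤ ‖E k (t, x')‖ := habs (t, x')
        have h2 : R ≤ max R 0 := le_max_left R 0
        simp only [hR₁] at habs'
        linarith
      simp only [hFdef, hψzero _ hRlt]
      ring
    have hintt : Integrable (fun t => F (E k (t, x'))) volume :=
      hcont.integrable_of_hasCompactSupport hsuppt
    have h1 : (∫ t in t₀..(t₀ + r/2), F (E k (t, x'))) ≤ ∫ t, F (E k (t, x')) := by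
      rw [intervalIntegral.integral_of_le (by linarith)]
      apply setIntegral_le_integral hintt
      filter_upwards with t
      simp only [hFdef]
      positivity
    exact le_trans (hcore x' hx') h1
  -- outer integral
  set J : (Fin k → ℝ) → ℝ := fun x' => ∫ t, F (E k (t, x')) with hJdef
  have hJint : Integrable J volume := by
    have := hGint'.integral_prod_right
    exact this
  have hJnn : ∀ x', 0 ≤ J x' := fun x' =>
    integral_nonneg fun t => by simp only [hFdef]; positivity
  have hc₁S : c₁ * (volume S).toReal ≤ ∫ x' in S, J x' := by
    have hSmeas : MeasurableSet S := hSdef ▸ measurableSet_ball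
    rw [mul_comm, ← measureReal_def, ← smul_eq_mul]
    apply setIntegral_ge_of_const_le hSmeas hSfin
    · intro x' hx'
      have hx'' : dist x' 0 < r/2 := hx'
      rw [dist_zero_right] at hx''
      exact hinner x' hx''
    · exact hJint.integrableOn
  have hSle : (∫ x' in S, J x') ≤ ∫ x', J x' :=
    setIntegral_le_integral hJint (Filter.Eventually.of_forall hJnn)
  calc c₁ * (volume S).toReal ≤ ∫ x' in S, J x' := hc₁S
    _ ≤ ∫ x', J x' := hSle
    _ = ∫ q : ℝ × (Fin k → ℝ), F (E k q) := hfub.symm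
    _ = ∫ x, F x := heq.symm
    _ = ∫ x : EuclideanSpace ℝ (Fin (k+1)), (ψ x)^2 * (W (lam * ψ x))^2 := rfl
end
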